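/- arXiv:math/0009197 — 2 statements merged into one kernel-verified Lean document; each statement's English description precedes it below -/
import Mathlib

section
/- Let w ∈ S_n, let k < q and i_1, ..., i_p ≤ k < q be distinct indices with w(q) > w(i_1) > ... > w(i_p), and suppose ℓ(w·t_{i_1,q}·t_{i_2,q}⋯t_{i_p,q}) = ℓ(w) + p. Then for every r ≤ p, ℓ(w·t_{i_1,q}·t_{i_2,q}⋯t_{i_r,q}) = ℓ(w) + r; in fact the chain w < w·t_{i_1,q} < w·t_{i_1,q}t_{i_2,q} < ... < w·t_{i_1,q}⋯t_{i_p,q} is strictly increasing in Bruhat order with each step increasing length by exactly 1. -/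
open Equiv MvPolynomial
open scoped Classical

/-- Coxeter length of a permutation of `Fin n`: the number of inversions. -/
noncomputable def len {n : ℕ} (w : Equiv.Perm (Fin n)) : ℕ :=
  (Finset.univ.filter (fun p : Fin n × Fin n => p.1 < p.2 ∧ w p.2 < w p.1)).card

/-- The simple reflection swapping the 0-based positions `a` and `a+1`;
this is the 1-based simple reflection `s_{a+1}`. -/
def sr0 (n : ℕ) (a : ℕ) : Equiv.Perm (Fin n) :=
  if h : a + 1 < n then Equiv.swap ⟨a, Nat.lt_of_succ_lt h⟩ ⟨a + 1, h⟩ else 1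

/-- `c[k,m] = s_{k-m+1} ⋯ s_{k-1} s_k` (1-based indices), with `c[k,0] = e`. -/
def cyc (n k m : ℕ) : Equiv.Perm (Fin n) :=
  ((List.range m).map (fun t => sr0 n (k - m + t))).prod

/-- The coordinate weight `L_i` (1-based), i.e. the variable `X (i-1)`. -/
noncomputable def LL (n : ℕ) (i : ℕ) : MvPolynomial (Fin n) ℚ :=
  if h : i - 1 < n then X ⟨i - 1, h⟩ else 0

/-- The simple root `α_{a+1} = L_{a+1} - L_{a+2}` (0-based `a`). -/
noncomputable def alphaR (n a : ℕ) : MvPolynomial (Fin n) ℚ :=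
  if h : a + 1 < n then X ⟨a, Nat.lt_of_succ_lt h⟩ - X ⟨a + 1, h⟩ else 0

/-- The fundamental weight `χ_i = L_1 + ⋯ + L_i` (1-based `i`). -/
noncomputable def chiW (n i : ℕ) : MvPolynomial (Fin n) ℚ :=
  ∑ j ∈ Finset.univ.filter (fun j : Fin n => (j : ℕ) < i), X j

/-- `∏_{β ∈ Δ₊ ∩ w⁻¹Δ₋} β`, the value `ξ^w(w)`. -/
noncomputable def topVal {n : ℕ} (w : Equiv.Perm (Fin n)) : MvPolynomial (Fin n) ℚ :=
  ∏ p ∈ Finset.univ.filter (fun p : Fin n × Fin n => p.1 < p.2 ∧ w p.2 < w p.1),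
    (X p.1 - X p.2)

/-- Bruhat order on the symmetric group. -/
def bruhatLE {n : ℕ} (w v : Equiv.Perm (Fin n)) : Prop :=
  Relation.ReflTransGen
    (fun x y => (∃ i j : Fin n, y = x * Equiv.swap i j) ∧ len y = len x + 1) w v

/-- The characterization of the family of equivariant Schubert classes `ξ^w : W → S(h*)`:
support condition, value at `w`, and the divided-difference recursion
`𝒜_a ξ^w = ξ^{w s_a}` if `w s_a < w` and `0` otherwise, where
`(𝒜_a f)(v) = (f(v s_a) - f(v))/(v·α_a)`. -/
def IsXi {n : ℕ} (xi : Equiv.Perm (Fin n) → Equiv.Perm (Fin n) → MvPolynomial (Fin n) ℚ) :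
    Prop :=
  (∀ w v, ¬ bruhatLE w v → xi w v = 0) ∧
  (∀ w, xi w w = topVal w) ∧
  (∀ w v (a : ℕ), a + 1 < n →
    (len (w * sr0 n a) < len w →
      xi w (v * sr0 n a) - xi w v = (rename ⇑v (alphaR n a)) * xi (w * sr0 n a) v) ∧
    (len w < len (w * sr0 n a) → xi w (v * sr0 n a) = xi w v))

/-- The permutation `t_{i_1,q} ⋯ t_{i_s,q}` determined by the list `l = [i_1, …, i_s]`
and the index `q`. -/
def cycPerm {n : ℕ} (l : List (Fin n)) (q : Fin n) : Equiv.Perm (Fin n) :=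
  (l.map (fun i => Equiv.swap i q)).prod

/-- The data `(l, q)` with `l = [i_1, …, i_s]` defines a cycle `ζ = t_{i_1,q} ⋯ t_{i_s,q}`
such that `wζ` is special `k`-superior to `w` of degree `s` (1-based `k`):
`i_1, …, i_s ≤ k < q`, `w(q) > w(i_1) > ⋯ > w(i_s)`, and `ℓ(wζ) = ℓ(w) + s`. -/
def IsSpecialCycle {n : ℕ} (w : Equiv.Perm (Fin n)) (k : ℕ) (l : List (Fin n)) (q : Fin n) :
    Prop :=
  l ≠ [] ∧ (q :: l).Nodup ∧ (∀ i ∈ l, (i : ℕ) < k) ∧ k ≤ (q : ℕ) ∧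
  (q :: l).Chain' (fun a b => w b < w a) ∧
  len (w * cycPerm l q) = len w + l.length

/-- `u` is special `k`-superior to `w` of degree `p` (1-based `k`):
`u = w ζ₁ ⋯ ζ_r` for pairwise disjoint cycles `ζ_i` as in `IsSpecialCycle`,
with degrees summing to `p`. -/
def SpecialSuperior {n : ℕ} (w u : Equiv.Perm (Fin n)) (k p : ℕ) : Prop :=
  ∃ L : List (List (Fin n) × Fin n),
    (∀ c ∈ L, IsSpecialCycle w k c.1 c.2) ∧
    L.Pairwise (fun c d => ∀ x ∈ c.2 :: c.1, x ∉ d.2 :: d.1) ∧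
    u = w * (L.map (fun c => cycPerm c.1 c.2)).prod ∧
    (L.map (fun c => c.1.length)).sum = p

/-- The set of indices of `u > w`: `𝓘 = {i ≤ k | w⁻¹u(i) ≠ i}` (stored 0-based,
so `i` ranges over 0-based positions `< k`). -/
noncomputable def idxSet {n : ℕ} (w u : Equiv.Perm (Fin n)) (k : ℕ) : Finset ℕ :=
  (Finset.range k).filter (fun i => ∃ h : i < n, (w⁻¹ * u) ⟨i, h⟩ ≠ ⟨i, h⟩)

/-- The 0-based positions `< k` not in `𝓘`, listed in decreasing order; its `(j-1)`-st
entry is the 0-based version of `r_j`. -/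
noncomputable def freeList {n : ℕ} (w u : Equiv.Perm (Fin n)) (k : ℕ) : List ℕ :=
  (((Finset.range k) \ idxSet w u k).sort (· ≤ ·)).reverse

/-- `λ_j = #{i ∈ 𝓘 | i < r_j}` (1-based `j`). -/
noncomputable def lamFn {n : ℕ} (w u : Equiv.Perm (Fin n)) (k : ℕ) (j : ℕ) : ℕ :=
  ((idxSet w u k).filter (fun i => i < (freeList w u k).getD (j - 1) 0)).card

/-- The associated element `v(u,w,k) = w π₁ π₂ ⋯ π_{k-p}` where
`π_j = s_{λ_{k-p-j+1}+j-1} ⋯ s_{j+1} s_j` (1-based) if `λ_{k-p-j+1} ≠ 0` and `π_j = e`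
otherwise. -/
noncomputable def assocElt {n : ℕ} (w u : Equiv.Perm (Fin n)) (k p : ℕ) :
    Equiv.Perm (Fin n) :=
  w * ((List.range (k - p)).map (fun j0 =>
        ((List.range (lamFn w u k (k - p - j0))).reverse.map
          (fun t => sr0 n (j0 + t))).prod)).prod

lemma cycPerm_nil {n : ℕ} (q : Fin n) : cycPerm [] q = 1 := rfl

lemma cycPerm_cons {n : ℕ} (i : Fin n) (m : List (Fin n)) (q : Fin n) :
    cycPerm (i :: m) q = Equiv.swap i q * cycPerm m q := by
  simp [cycPerm]

lemma cycPerm_append {n : ℕ} (m m' : List (Fin n)) (q : Fin n) :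
    cycPerm (m ++ m') q = cycPerm m q * cycPerm m' q := by
  simp [cycPerm]

lemma cycPerm_apply_not_mem {n : ℕ} (m : List (Fin n)) (q j : Fin n)
    (hj : j ∉ m) (hjq : j ≠ q) : cycPerm m q j = j := by
  induction m with
  | nil => rfl
  | cons i m ih =>
    rw [cycPerm_cons, Equiv.Perm.mul_apply, ih (fun h => hj (List.mem_cons_of_mem _ h))]
    exact Equiv.swap_apply_of_ne_of_ne (fun h => hj (h ▸ List.mem_cons_self)) hjq

lemma cycPerm_snoc_apply_q {n : ℕ} (m : List (Fin n)) (i q : Fin n)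
    (hi : i ∉ m) (hiq : i ≠ q) : cycPerm (m ++ [i]) q q = i := by
  rw [cycPerm_append, Equiv.Perm.mul_apply]
  have : cycPerm [i] q q = i := by
    rw [cycPerm_cons, cycPerm_nil]
    simp [Equiv.swap_apply_right]
  rw [this]
  exact cycPerm_apply_not_mem m q i hi hiq

lemma len_mul_swap {n : ℕ} (x : Equiv.Perm (Fin n)) (a b : Fin n) (hab : a < b)
    (hx : x a < x b) : len x + 1 ≤ len (x * Equiv.swap a b) := by
  classical
  set S := Finset.univ.filter (fun p : Fin n × Fin n => p.1 < p.2 ∧ x p.2 < x p.1) with hS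
  have habS : (a, b) ∉ S := by
    simp only [hS, Finset.mem_filter, Finset.mem_univ, true_and]
    rintro ⟨-, h2⟩; exact absurd hx (not_lt.mpr h2.le)
  set f : Fin n × Fin n → Fin n × Fin n :=
    fun p => if Equiv.swap a b p.1 < Equiv.swap a b p.2
      then (Equiv.swap a b p.1, Equiv.swap a b p.2) else p with hf
  have hmem : ∀ p ∈ insert (a, b) S, f p ∈
      Finset.univ.filter (fun p : Fin n × Fin n =>
        p.1 < p.2 ∧ (x * Equiv.swap a b) p.2 < (x * Equiv.swap a b) p.1) := by
    intro p hp
    have hp' : p = (a, b) ∨ (p.1 < p.2 ∧ x p.2 < x p.1) := by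
      rcases Finset.mem_insert.mp hp with h | h
      · exact Or.inl h
      · right; simpa [hS] using h
    have h1 : p.1 < p.2 := by
      rcases hp' with h | h
      · rw [h]; exact hab
      · exact h.1
    rw [Finset.mem_filter]
    simp only [Finset.mem_filter, Finset.mem_univ, true_and, Equiv.Perm.mul_apply]
    rw [hf]
    dsimp only
    split_ifs with h
    · refine ⟨h, ?_⟩
      simp only [Equiv.swap_apply_self]
      rcases hp' with he | he
      · exfalso
        rw [he] at h
        simp only [Equiv.swap_apply_left, Equiv.swap_apply_right] at h
        exact absurd hab (not_lt.mpr h.le)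
      · exact he.2
    · refine ⟨h1, ?_⟩
      have hne12 : p.1 ≠ p.2 := ne_of_lt h1
      have hσne : Equiv.swap a b p.2 < Equiv.swap a b p.1 :=
        lt_of_le_of_ne (not_lt.mp h) (fun hE => hne12 ((Equiv.swap a b).injective hE.symm))
      by_cases h1a : p.1 = a
      · by_cases h2b : p.2 = b
        · rw [h1a, h2b]
          rw [Equiv.swap_apply_left, Equiv.swap_apply_right]
          exact hx
        · have h2a : p.2 ≠ a := by rw [h1a] at h1; exact (ne_of_gt h1)
          have hxp : x p.2 < x p.1 := by
            rcases hp' with he | he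
            · exact absurd (congrArg Prod.snd he) h2b
            · exact he.2
          rw [h1a] at hxp ⊢
          rw [Equiv.swap_apply_of_ne_of_ne h2a h2b, Equiv.swap_apply_left]
          exact hxp.trans hx
      · by_cases h1b : p.1 = b
        · exfalso
          have h2a : p.2 ≠ a := fun hE => by
            rw [h1b, hE] at h1; exact absurd (h1.trans hab) (lt_irrefl _)
          have h2b : p.2 ≠ b := fun hE => by rw [h1b, hE] at h1; exact lt_irrefl _ h1
          rw [h1b, Equiv.swap_apply_right, Equiv.swap_apply_of_ne_of_ne h2a h2b] at hσne
          rw [h1b] at h1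
          exact absurd ((hab.trans h1).trans hσne) (lt_irrefl _)
        · rw [Equiv.swap_apply_of_ne_of_ne h1a h1b] at hσne ⊢
          by_cases h2a : p.2 = a
          · exfalso
            rw [h2a, Equiv.swap_apply_left] at hσne
            rw [h2a] at h1
            exact absurd ((h1.trans hab).trans hσne) (lt_irrefl _)
          · by_cases h2b : p.2 = b
            · have hxp : x p.2 < x p.1 := by
                rcases hp' with he | he
                · exact absurd (congrArg Prod.fst he) h1a
                · exact he.2
              rw [h2b] at hxp ⊢
              rw [Equiv.swap_apply_right]
              exact hx.trans hxp
            · exfalso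
              rw [Equiv.swap_apply_of_ne_of_ne h2a h2b] at hσne
              exact absurd (h1.trans hσne) (lt_irrefl _)
  have hinj : Set.InjOn f (insert (a, b) S : Finset (Fin n × Fin n)) := by
    intro p hp p' hp' hfe
    have h1 : p.1 < p.2 := by
      rcases Finset.mem_insert.mp hp with h | h
      · rw [h]; exact hab
      · exact (Finset.mem_filter.mp h).2.1
    have h1' : p'.1 < p'.2 := by
      rcases Finset.mem_insert.mp hp' with h | h
      · rw [h]; exact hab
      · exact (Finset.mem_filter.mp h).2.1
    rw [hf] at hfe
    dsimp only at hfe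
    split_ifs at hfe with h h' h'
    · have e1 : Equiv.swap a b p.1 = Equiv.swap a b p'.1 := congrArg Prod.fst hfe
      have e2 : Equiv.swap a b p.2 = Equiv.swap a b p'.2 := congrArg Prod.snd hfe
      exact Prod.ext ((Equiv.swap a b).injective e1) ((Equiv.swap a b).injective e2)
    · exfalso
      rw [← hfe] at h'
      simp only [Equiv.swap_apply_self] at h'
      exact h' h1
    · exfalso
      rw [hfe] at h
      simp only [Equiv.swap_apply_self] at h
      exact h h1'
    · exact hfe
  have hcard := Finset.card_le_card_of_injOn f hmem hinj
  rw [Finset.card_insert_of_notMem habS] at hcard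
  simpa [len, hS] using hcard


theorem stmt1 {n : ℕ} (w : Equiv.Perm (Fin n)) (k : ℕ) (q : Fin n)
    (l : List (Fin n)) (hne : l ≠ [])
    (hnd : (q :: l).Nodup)
    (hk : ∀ i ∈ l, (i : ℕ) < k) (hq : k ≤ (q : ℕ))
    (hchain : (q :: l).Chain' (fun a b => w b < w a))
    (hlen : len (w * cycPerm l q) = len w + l.length) :
    (∀ r ≤ l.length, len (w * cycPerm (l.take r) q) = len w + r) ∧
    (∀ r < l.length,
      bruhatLE (w * cycPerm (l.take r) q) (w * cycPerm (l.take (r + 1)) q) ∧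
      len (w * cycPerm (l.take (r + 1)) q) = len (w * cycPerm (l.take r) q) + 1) := by
    classical
  have hql : q ∉ l := (List.nodup_cons.mp hnd).1
  have hlnd : l.Nodup := (List.nodup_cons.mp hnd).2
  have hchain' : ∀ i (h : i + 1 < (q :: l).length), w ((q :: l)[i+1]) < w ((q :: l)[i]) := by
    intro i h
    have := List.isChain_iff_getElem.mp hchain i (by simp at h ⊢; omega)
    simpa [List.get_eq_getElem] using this
  have hnotmem : ∀ r (hr : r < l.length), l[r] ∉ l.take r := by
    intro r hr hmem
    rw [List.mem_iff_getElem] at hmem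
    obtain ⟨j, hj, hje⟩ := hmem
    have hjr : j < r := by
      have : (l.take r).length = min r l.length := List.length_take
      omega
    have hj' : j < l.length := hjr.trans hr
    rw [List.getElem_take] at hje
    have := (List.Nodup.getElem_inj_iff hlnd).mp hje
    omega
  have hneq : ∀ r (hr : r < l.length), l[r] ≠ q := by
    intro r hr h
    exact hql (h ▸ List.getElem_mem hr)
  have haq : ∀ r (hr : r < l.length), l[r] < q := by
    intro r hr
    exact Fin.lt_def.mpr (lt_of_lt_of_le (hk _ (List.getElem_mem hr)) hq)
  have key : ∀ r (hr : r < l.length),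
      w * cycPerm (l.take (r+1)) q = (w * cycPerm (l.take r) q) * Equiv.swap (l[r]) q ∧
      len (w * cycPerm (l.take r) q) + 1 ≤ len (w * cycPerm (l.take (r+1)) q) := by
    intro r hr
    have htake : l.take (r+1) = l.take r ++ [l[r]] := by
      rw [List.take_succ]
      simp [List.getElem?_eq_getElem hr]
    have hsingle : cycPerm [l[r]] q = Equiv.swap (l[r]) q := by
      rw [cycPerm_cons, cycPerm_nil, mul_one]
    have hmul : w * cycPerm (l.take (r+1)) q
        = (w * cycPerm (l.take r) q) * Equiv.swap (l[r]) q := by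
      rw [htake, cycPerm_append, hsingle, mul_assoc]
    have hxa : (w * cycPerm (l.take r) q) (l[r]) = w (l[r]) := by
      rw [Equiv.Perm.mul_apply, cycPerm_apply_not_mem _ _ _ (hnotmem r hr) (hneq r hr)]
    have hlt : (w * cycPerm (l.take r) q) (l[r]) < (w * cycPerm (l.take r) q) q := by
      rw [hxa]
      rcases r with _ | r'
      · rw [show l.take 0 = [] from rfl, cycPerm_nil, mul_one]
        have h0 := hchain' 0 (by simp; omega)
        simpa using h0
      · have hr' : r' < l.length := (Nat.lt_succ_self r').trans hr
        have htake' : l.take (r'+1) = l.take r' ++ [l[r']] := by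
          rw [List.take_succ]
          simp [List.getElem?_eq_getElem hr']
        rw [htake', Equiv.Perm.mul_apply,
          cycPerm_snoc_apply_q _ _ _ (hnotmem r' hr') (hneq r' hr')]
        have h1 := hchain' (r'+1) (by simp; omega)
        simpa using h1
    exact ⟨hmul, hmul ▸ len_mul_swap _ _ _ (haq r hr) hlt⟩
  have mono : ∀ r d, r + d ≤ l.length →
      len (w * cycPerm (l.take r) q) + d ≤ len (w * cycPerm (l.take (r+d)) q) := by
    intro r d
    induction d with
    | zero => intro _; simp
    | succ d ih =>
      intro h
      have h1 := ih (by omega)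
      have h2 := (key (r+d) (by omega)).2
      show len (w * cycPerm (l.take r) q) + (d+1) ≤ len (w * cycPerm (l.take ((r+d)+1)) q)
      omega
  have hlen' : ∀ r ≤ l.length, len (w * cycPerm (l.take r) q) = len w + r := by
    intro r hr
    have h1 := mono 0 r (by omega)
    have h2 := mono r (l.length - r) (by omega)
    rw [show r + (l.length - r) = l.length by omega, List.take_length] at h2
    rw [show l.take 0 = [] from rfl, cycPerm_nil, mul_one, Nat.zero_add] at h1
    omega
  refine ⟨hlen', fun r hr => ?_⟩
  have e1 := hlen' r hr.le
  have e2 := hlen' (r+1) hr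
  refine ⟨Relation.ReflTransGen.single ⟨⟨l[r], q, (key r hr).1⟩, by omega⟩, by omega⟩
end

section
/- (Equivariant Chevalley/Monk formula for SL_n.) For any w ∈ S_n and simple reflection s_k, ξ^{s_k}·ξ^w = ξ^{s_k}(w)·ξ^w + Σ ξ^{w t_{i,j}}, where the sum is over all transpositions t_{i,j} with i ≤ k < j and ℓ(w t_{i,j}) = ℓ(w) + 1. -/
open Equiv MvPolynomial
open scoped Classical

section Master
variable {n : ℕ}

noncomputable def invs (y : Equiv.Perm (Fin n)) : Finset (Fin n × Fin n) :=
  Finset.univ.filter (fun p : Fin n × Fin n => p.1 < p.2 ∧ y p.2 < y p.1)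

lemma len_eq_card_invs (y : Equiv.Perm (Fin n)) : len y = (invs y).card := rfl

lemma mem_invs {y : Equiv.Perm (Fin n)} {p : Fin n × Fin n} :
    p ∈ invs y ↔ p.1 < p.2 ∧ y p.2 < y p.1 := by
  simp [invs]

/-- The sorting conjugation map. -/
noncomputable def Phi (t : Equiv.Perm (Fin n)) (p : Fin n × Fin n) : Fin n × Fin n :=
  if t p.1 < t p.2 then (t p.1, t p.2) else (t p.2, t p.1)

lemma lt_of_ne_of_not_lt {a b : Fin n} (hne : a ≠ b) (h : ¬ a < b) : b < a := by
  rcases lt_trichotomy a b with h1 | h1 | h1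
  · exact absurd h1 h
  · exact absurd h1 hne
  · exact h1

lemma Phi_Phi {t : Equiv.Perm (Fin n)} (ht : ∀ z, t (t z) = z) {p : Fin n × Fin n}
    (hp : p.1 < p.2) : Phi t (Phi t p) = p := by
  have hne : t p.1 ≠ t p.2 := fun h => absurd (t.injective h) hp.ne
  unfold Phi
  by_cases h : t p.1 < t p.2
  · simp only [h, if_pos, ht, hp, Prod.mk.eta]
  · have h' : t p.2 < t p.1 := lt_of_ne_of_not_lt hne h
    rw [if_neg h]
    simp only [ht]
    rw [if_neg (not_lt.mpr hp.le)]

lemma Phi_fst_lt_snd {t : Equiv.Perm (Fin n)} {p : Fin n × Fin n} (hp : p.1 < p.2) :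
    (Phi t p).1 < (Phi t p).2 := by
  have hne : t p.1 ≠ t p.2 := fun h => absurd (t.injective h) hp.ne
  unfold Phi
  by_cases h : t p.1 < t p.2
  · simpa [h]
  · simpa [h] using lt_of_ne_of_not_lt hne h

lemma Phi_mem_sdiff {x t : Equiv.Perm (Fin n)} (ht : ∀ z, t (t z) = z) {p : Fin n × Fin n}
    (hp : p ∈ invs (x * t) \ invs t) : Phi t p ∈ invs x \ invs t := by
  rw [Finset.mem_sdiff, mem_invs, mem_invs] at hp ⊢
  obtain ⟨⟨h12, hxt⟩, hnt⟩ := hp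
  have hne : t p.1 ≠ t p.2 := fun h => absurd (t.injective h) h12.ne
  have ht12 : t p.1 < t p.2 := by
    rcases lt_trichotomy (t p.1) (t p.2) with h | h | h
    · exact h
    · exact absurd h hne
    · exact absurd ⟨h12, h⟩ hnt
  unfold Phi
  rw [if_pos ht12]
  refine ⟨⟨ht12, by simpa [Equiv.Perm.mul_apply] using hxt⟩, ?_⟩
  rintro ⟨-, hlt⟩
  rw [ht, ht] at hlt
  exact absurd h12 (not_lt.mpr hlt.le)

lemma Phi_mem_inter {x t : Equiv.Perm (Fin n)} (ht : ∀ z, t (t z) = z) {p : Fin n × Fin n}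
    (hp : p ∈ invs (x * t) ∩ invs t) : Phi t p ∈ invs t \ invs x := by
  rw [Finset.mem_inter, mem_invs, mem_invs] at hp
  rw [Finset.mem_sdiff, mem_invs, mem_invs]
  obtain ⟨⟨h12, hxt⟩, -, ht21⟩ := hp
  unfold Phi
  rw [if_neg (not_lt.mpr ht21.le)]
  refine ⟨⟨ht21, by rw [ht, ht]; exact h12⟩, ?_⟩
  rintro ⟨-, hlt⟩
  simp only [Equiv.Perm.mul_apply] at hxt
  exact absurd hxt (not_lt.mpr hlt.le)

lemma Phi_mem_inter' {x t : Equiv.Perm (Fin n)} (ht : ∀ z, t (t z) = z) {p : Fin n × Fin n}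
    (hp : p ∈ invs t \ invs x) : Phi t p ∈ invs (x * t) ∩ invs t := by
  rw [Finset.mem_sdiff, mem_invs, mem_invs] at hp
  rw [Finset.mem_inter, mem_invs, mem_invs]
  obtain ⟨⟨h12, ht21⟩, hnx⟩ := hp
  have hxne : x p.1 ≠ x p.2 := fun h => absurd (x.injective h) h12.ne
  have hx12 : x p.1 < x p.2 := by
    rcases lt_trichotomy (x p.1) (x p.2) with h | h | h
    · exact h
    · exact absurd h hxne
    · exact absurd ⟨h12, h⟩ hnx
  unfold Phi
  rw [if_neg (not_lt.mpr ht21.le)]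
  exact ⟨⟨ht21, by simp only [Equiv.Perm.mul_apply, ht]; exact hx12⟩,
    ⟨ht21, by rw [ht, ht]; exact h12⟩⟩

lemma master (x t : Equiv.Perm (Fin n)) (ht : ∀ z, t (t z) = z) :
    len (x * t) + 2 * ((invs t) ∩ (invs x)).card = len x + (invs t).card := by
  have hxt : (x * t) * t = x := by
    ext z; simp [Equiv.Perm.mul_apply, ht]
  have fst_lt : ∀ {y : Equiv.Perm (Fin n)} {p : Fin n × Fin n}, p ∈ invs y → p.1 < p.2 :=
    fun hp => (mem_invs.mp hp).1
  have c1 : (invs (x * t) \ invs t).card = (invs x \ invs t).card := by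
    refine Finset.card_nbij' (Phi t) (Phi t) (fun p hp => Phi_mem_sdiff ht hp)
      (fun p hp => ?_) (fun p hp => Phi_Phi ht (fst_lt (Finset.mem_sdiff.mp hp).1))
      (fun p hp => Phi_Phi ht (fst_lt (Finset.mem_sdiff.mp hp).1))
    have := Phi_mem_sdiff (x := x * t) ht (by rwa [hxt])
    exact this
  have c2 : (invs (x * t) ∩ invs t).card = (invs t \ invs x).card := by
    refine Finset.card_nbij' (Phi t) (Phi t) (fun p hp => Phi_mem_inter ht hp)
      (fun p hp => Phi_mem_inter' ht hp)
      (fun p hp => Phi_Phi ht (fst_lt (Finset.mem_inter.mp hp).1))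
      (fun p hp => Phi_Phi ht (fst_lt (Finset.mem_sdiff.mp hp).1))
  have split1 : len (x * t) = (invs (x * t) ∩ invs t).card + (invs (x * t) \ invs t).card :=
    (Finset.card_inter_add_card_sdiff _ _).symm
  have split2 : (invs x ∩ invs t).card + (invs x \ invs t).card = len x :=
    Finset.card_inter_add_card_sdiff _ _
  have split3 : (invs t ∩ invs x).card + (invs t \ invs x).card = (invs t).card :=
    Finset.card_inter_add_card_sdiff _ _
  rw [split1, c1, c2, ← split2, ← split3, Finset.inter_comm (invs x) (invs t)]
  ring

end Master

section SwapCount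
variable {n : ℕ}

lemma swap_invol (i j : Fin n) : ∀ z, Equiv.swap i j (Equiv.swap i j z) = z := fun z =>
  Equiv.swap_apply_self i j z

lemma mem_invs_swap {i j : Fin n} (hij : i < j) {p : Fin n × Fin n} :
    p ∈ invs (Equiv.swap i j) ↔
      (p = (i, j)) ∨ (p.1 = i ∧ i < p.2 ∧ p.2 < j) ∨ (p.2 = j ∧ i < p.1 ∧ p.1 < j) := by
  rw [mem_invs]
  constructor
  · rintro ⟨h12, hsw⟩
    by_cases h1i : p.1 = i
    · by_cases h2j : p.2 = j
      · exact Or.inl (Prod.ext h1i h2j)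
      · have h2i : p.2 ≠ i := ne_of_gt (h1i ▸ h12)
        rw [h1i, Equiv.swap_apply_left, Equiv.swap_apply_of_ne_of_ne h2i h2j] at hsw
        exact Or.inr (Or.inl ⟨h1i, h1i ▸ h12, hsw⟩)
    · by_cases h1j : p.1 = j
      · have h2i : p.2 ≠ i := ne_of_gt (lt_trans hij (h1j ▸ h12))
        have h2j : p.2 ≠ j := ne_of_gt (h1j ▸ h12)
        rw [h1j, Equiv.swap_apply_right, Equiv.swap_apply_of_ne_of_ne h2i h2j] at hsw
        exact absurd (lt_trans (lt_trans hsw hij) (h1j ▸ h12)) (lt_irrefl _)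
      · by_cases h2i : p.2 = i
        · rw [h2i, Equiv.swap_apply_left, Equiv.swap_apply_of_ne_of_ne h1i h1j] at hsw
          have hj : p.1 < j := lt_trans h12 (by rw [h2i]; exact hij)
          exact absurd (lt_trans hsw hj) (lt_irrefl _)
        · by_cases h2j : p.2 = j
          · rw [h2j, Equiv.swap_apply_right, Equiv.swap_apply_of_ne_of_ne h1i h1j] at hsw
            exact Or.inr (Or.inr ⟨h2j, hsw, h2j ▸ h12⟩)
          · rw [Equiv.swap_apply_of_ne_of_ne h1i h1j,
              Equiv.swap_apply_of_ne_of_ne h2i h2j] at hsw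
            exact absurd h12 (not_lt.mpr hsw.le)
  · rintro (h | ⟨h1, h2, h3⟩ | ⟨h1, h2, h3⟩)
    · rw [h]
      exact ⟨hij, by rw [Equiv.swap_apply_left, Equiv.swap_apply_right]; exact hij⟩
    · have h2i : p.2 ≠ i := ne_of_gt h2
      have h2j : p.2 ≠ j := ne_of_lt h3
      rw [h1, Equiv.swap_apply_left, Equiv.swap_apply_of_ne_of_ne h2i h2j]
      exact ⟨h1 ▸ h2, h3⟩
    · have h1i : p.1 ≠ i := ne_of_gt h2
      have h1j : p.1 ≠ j := ne_of_lt h3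
      rw [h1, Equiv.swap_apply_right, Equiv.swap_apply_of_ne_of_ne h1i h1j]
      exact ⟨h1 ▸ h3, h2⟩

noncomputable def midSet (i j : Fin n) : Finset (Fin n) :=
  Finset.univ.filter (fun m => i < m ∧ m < j)

lemma invs_swap_eq {i j : Fin n} (hij : i < j) :
    invs (Equiv.swap i j) =
      insert (i, j) ((midSet i j).image (fun m => (i, m)) ∪
        (midSet i j).image (fun m => (m, j))) := by
  ext p
  rw [mem_invs_swap hij]
  simp only [Finset.mem_insert, Finset.mem_union, Finset.mem_image, midSet,
    Finset.mem_filter, Finset.mem_univ, true_and]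
  constructor
  · rintro (h | ⟨h1, h2, h3⟩ | ⟨h1, h2, h3⟩)
    · exact Or.inl h
    · exact Or.inr (Or.inl ⟨p.2, ⟨h2, h3⟩, by rw [← h1]⟩)
    · exact Or.inr (Or.inr ⟨p.1, ⟨h2, h3⟩, by rw [← h1]⟩)
  · rintro (h | ⟨m, ⟨hm1, hm2⟩, hm⟩ | ⟨m, ⟨hm1, hm2⟩, hm⟩)
    · exact Or.inl h
    · exact Or.inr (Or.inl ⟨by rw [← hm], by rw [← hm]; exact ⟨hm1, hm2⟩⟩)
    · exact Or.inr (Or.inr ⟨by rw [← hm], by rw [← hm]; exact ⟨hm1, hm2⟩⟩)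

lemma card_invs_swap {i j : Fin n} (hij : i < j) :
    (invs (Equiv.swap i j)).card = 2 * (midSet i j).card + 1 := by
  rw [invs_swap_eq hij]
  have hd : Disjoint ((midSet i j).image (fun m => (i, m)))
      ((midSet i j).image (fun m => (m, j))) := by
    rw [Finset.disjoint_left]
    rintro p hp1 hp2
    simp only [Finset.mem_image, midSet, Finset.mem_filter, Finset.mem_univ, true_and] at hp1 hp2
    obtain ⟨m, ⟨hm1, -⟩, hm⟩ := hp1
    obtain ⟨m', ⟨hm1', -⟩, hm'⟩ := hp2
    rw [← hm'] at hm
    have : m' = i := (Prod.ext_iff.mp hm).1.symm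
    rw [this] at hm1'; exact lt_irrefl _ hm1'
  have hni : (i, j) ∉ ((midSet i j).image (fun m => (i, m)) ∪
      (midSet i j).image (fun m => (m, j))) := by
    simp only [Finset.mem_union, Finset.mem_image, midSet, Finset.mem_filter,
      Finset.mem_univ, true_and, Prod.mk.injEq]
    rintro (⟨m, ⟨-, hm2⟩, -, rfl⟩ | ⟨m, ⟨hm1, -⟩, rfl, -⟩)
    · exact lt_irrefl _ hm2
    · exact lt_irrefl _ hm1
  rw [Finset.card_insert_of_notMem hni, Finset.card_union_of_disjoint hd,
    Finset.card_image_of_injective _ (fun a b h => (Prod.ext_iff.mp h).2),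
    Finset.card_image_of_injective _ (fun a b h => (Prod.ext_iff.mp h).1)]
  ring

lemma len_mul_swap_master {x : Equiv.Perm (Fin n)} {i j : Fin n} (hij : i < j) :
    len (x * Equiv.swap i j) + 2 * ((invs (Equiv.swap i j)) ∩ invs x).card
      = len x + 2 * (midSet i j).card + 1 := by
  rw [master x _ (swap_invol i j), card_invs_swap hij]; ring

lemma sr0_eq_swap {b : ℕ} (hb : b + 1 < n) :
    sr0 n b = Equiv.swap ⟨b, Nat.lt_of_succ_lt hb⟩ ⟨b + 1, hb⟩ := dif_pos hb

lemma fin_b_lt (hb : b + 1 < n) :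
    (⟨b, Nat.lt_of_succ_lt hb⟩ : Fin n) < ⟨b + 1, hb⟩ := by
  exact Nat.lt_succ_self b

lemma midSet_adj (hb : b + 1 < n) :
    midSet (⟨b, Nat.lt_of_succ_lt hb⟩ : Fin n) ⟨b + 1, hb⟩ = ∅ := by
  ext m
  simp only [midSet, Finset.mem_filter, Finset.mem_univ, true_and, Finset.notMem_empty,
    iff_false, not_and, Fin.lt_def]
  omega

lemma len_sr0_ascent {b : ℕ} (hb : b + 1 < n) {x : Equiv.Perm (Fin n)}
    (h : x ⟨b, Nat.lt_of_succ_lt hb⟩ < x ⟨b + 1, hb⟩) :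
    len (x * sr0 n b) = len x + 1 := by
  have hm := len_mul_swap_master (x := x) (fin_b_lt hb)
  rw [midSet_adj hb, invs_swap_eq (fin_b_lt hb), midSet_adj hb] at hm
  simp only [Finset.image_empty, Finset.union_empty, LawfulSingleton.insert_empty_eq,
    Finset.card_empty] at hm
  have hni : ((⟨b, Nat.lt_of_succ_lt hb⟩ : Fin n), (⟨b + 1, hb⟩ : Fin n)) ∉ invs x := by
    rw [mem_invs]
    rintro ⟨-, hlt⟩
    exact absurd h (not_lt.mpr hlt.le)
  rw [Finset.singleton_inter_of_notMem hni] at hm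
  rw [sr0_eq_swap hb]
  simpa using hm

lemma len_sr0_descent {b : ℕ} (hb : b + 1 < n) {x : Equiv.Perm (Fin n)}
    (h : x ⟨b + 1, hb⟩ < x ⟨b, Nat.lt_of_succ_lt hb⟩) :
    len (x * sr0 n b) + 1 = len x := by
  have hm := len_mul_swap_master (x := x) (fin_b_lt hb)
  rw [midSet_adj hb, invs_swap_eq (fin_b_lt hb), midSet_adj hb] at hm
  simp only [Finset.image_empty, Finset.union_empty, LawfulSingleton.insert_empty_eq,
    Finset.card_empty] at hm
  have hni : ((⟨b, Nat.lt_of_succ_lt hb⟩ : Fin n), (⟨b + 1, hb⟩ : Fin n)) ∈ invs x := by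
    rw [mem_invs]; exact ⟨fin_b_lt hb, h⟩
  rw [Finset.singleton_inter_of_mem hni] at hm
  rw [sr0_eq_swap hb]
  simp only [Finset.card_singleton] at hm
  omega

lemma apply_ne {x : Equiv.Perm (Fin n)} {a c : Fin n} (h : a ≠ c) : x a ≠ x c :=
  fun hh => h (x.injective hh)

/-- dichotomy for adjacent multiplication -/
lemma len_sr0_cases {b : ℕ} (hb : b + 1 < n) (x : Equiv.Perm (Fin n)) :
    (x ⟨b, Nat.lt_of_succ_lt hb⟩ < x ⟨b + 1, hb⟩ ∧ len (x * sr0 n b) = len x + 1) ∨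
    (x ⟨b + 1, hb⟩ < x ⟨b, Nat.lt_of_succ_lt hb⟩ ∧ len (x * sr0 n b) + 1 = len x) := by
  rcases lt_trichotomy (x ⟨b, Nat.lt_of_succ_lt hb⟩) (x ⟨b + 1, hb⟩) with h | h | h
  · exact Or.inl ⟨h, len_sr0_ascent hb h⟩
  · exact absurd h (apply_ne (by simp [Fin.ext_iff]))
  · exact Or.inr ⟨h, len_sr0_descent hb h⟩

lemma cover_swap_lemma {x : Equiv.Perm (Fin n)} {i j : Fin n} (hij : i < j)
    (h : len (x * Equiv.swap i j) = len x + 1) :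
    x i < x j ∧ ∀ m : Fin n, i < m → m < j → ¬(x i < x m ∧ x m < x j) := by
  have hm := len_mul_swap_master (x := x) hij
  rw [h] at hm
  have hC : ((invs (Equiv.swap i j)) ∩ invs x).card = (midSet i j).card := by omega
  have hxij : x i < x j := by
    by_contra hxc
    have hx : x j < x i := lt_of_ne_of_not_lt (apply_ne hij.ne) hxc
    -- injection from insert i (midSet i j) into the intersection
    set g : Fin n → Fin n × Fin n :=
      fun m => if m = i then (i, j) else if x m < x i then (i, m) else (m, j) with hg
    have hmem : ∀ m ∈ insert i (midSet i j), g m ∈ (invs (Equiv.swap i j)) ∩ invs x := by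
      intro m hm'
      rcases Finset.mem_insert.mp hm' with rfl | hmid
      · rw [Finset.mem_inter, hg]
        simp only [if_pos rfl]
        exact ⟨(mem_invs_swap hij).mpr (Or.inl rfl), mem_invs.mpr ⟨hij, hx⟩⟩
      · simp only [midSet, Finset.mem_filter, Finset.mem_univ, true_and] at hmid
        obtain ⟨him, hmj⟩ := hmid
        have hmi : m ≠ i := ne_of_gt him
        rw [Finset.mem_inter, hg]
        simp only [if_neg hmi]
        by_cases hxm : x m < x i
        · rw [if_pos hxm]
          exact ⟨(mem_invs_swap hij).mpr (Or.inr (Or.inl ⟨rfl, him, hmj⟩)),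
            mem_invs.mpr ⟨him, hxm⟩⟩
        · rw [if_neg hxm]
          have hxm' : x i < x m := lt_of_ne_of_not_lt (apply_ne hmi) hxm
          exact ⟨(mem_invs_swap hij).mpr (Or.inr (Or.inr ⟨rfl, him, hmj⟩)),
            mem_invs.mpr ⟨hmj, lt_trans hx hxm'⟩⟩
    have hinj : Set.InjOn g ↑(insert i (midSet i j)) := by
      intro a ha b hb' hab
      have key : ∀ c ∈ insert i (midSet i j), ∀ d ∈ insert i (midSet i j),
          g c = g d → c = i → d = i ∨ False → True := fun _ _ _ _ _ _ _ => trivial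
      rw [hg] at hab
      simp only at hab
      by_cases hai : a = i <;> by_cases hbi : b = i
      · rw [hai, hbi]
      · rw [if_pos hai, if_neg hbi] at hab
        by_cases hxb : x b < x i
        · rw [if_pos hxb] at hab
          have hjb : j = b := (Prod.ext_iff.mp hab).2
          have hbmem := Finset.mem_insert.mp hb'
          rcases hbmem with h' | h'
          · exact absurd h' hbi
          · simp only [midSet, Finset.mem_filter] at h'
            exact absurd (hjb ▸ h'.2.2) (lt_irrefl _)
        · rw [if_neg hxb] at hab
          have hib : i = b := (Prod.ext_iff.mp hab).1
          exact absurd hib.symm hbi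
      · rw [if_neg hai, if_pos hbi] at hab
        by_cases hxa : x a < x i
        · rw [if_pos hxa] at hab
          have haj : a = j := (Prod.ext_iff.mp hab).2
          have hamem := Finset.mem_insert.mp ha
          rcases hamem with h' | h'
          · exact absurd h' hai
          · simp only [midSet, Finset.mem_filter] at h'
            exact absurd (haj ▸ h'.2.2) (lt_irrefl _)
        · rw [if_neg hxa] at hab
          have hai' : a = i := (Prod.ext_iff.mp hab).1
          exact absurd hai' hai
      · rw [if_neg hai, if_neg hbi] at hab
        have hamid : a ∈ midSet i j := (Finset.mem_insert.mp ha).resolve_left hai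
        have hbmid : b ∈ midSet i j := (Finset.mem_insert.mp hb').resolve_left hbi
        simp only [midSet, Finset.mem_filter, Finset.mem_univ, true_and] at hamid hbmid
        by_cases hxa : x a < x i <;> by_cases hxb : x b < x i
        · rw [if_pos hxa, if_pos hxb] at hab; exact (Prod.ext_iff.mp hab).2
        · rw [if_pos hxa, if_neg hxb] at hab
          have hib : i = b := (Prod.ext_iff.mp hab).1
          exact absurd (hib ▸ hbmid.1) (lt_irrefl _)
        · rw [if_neg hxa, if_pos hxb] at hab
          have hia : a = i := (Prod.ext_iff.mp hab).1
          exact absurd (hia ▸ hamid.1) (lt_irrefl _)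
        · rw [if_neg hxa, if_neg hxb] at hab; exact (Prod.ext_iff.mp hab).1
    have hcard := Finset.card_le_card_of_injOn g hmem hinj
    rw [Finset.card_insert_of_notMem (by
      simp only [midSet, Finset.mem_filter, Finset.mem_univ, true_and, not_and]
      exact fun h' => absurd h' (lt_irrefl _))] at hcard
    omega
  refine ⟨hxij, ?_⟩
  rintro m him hmj ⟨hxm1, hxm2⟩
  -- now compute the intersection exactly
  have hset : (invs (Equiv.swap i j)) ∩ invs x =
      ((midSet i j).filter (fun m => x m < x i)).image (fun m => (i, m)) ∪
      ((midSet i j).filter (fun m => x j < x m)).image (fun m => (m, j)) := by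
    ext p
    rw [Finset.mem_inter, mem_invs_swap hij, mem_invs]
    simp only [Finset.mem_union, Finset.mem_image, Finset.mem_filter, midSet,
      Finset.mem_univ, true_and]
    constructor
    · rintro ⟨h | ⟨h1, h2, h3⟩ | ⟨h1, h2, h3⟩, hp1, hp2⟩
      · rw [h] at hp2; exact absurd hxij (not_lt.mpr hp2.le)
      · exact Or.inl ⟨p.2, ⟨⟨h2, h3⟩, by rw [← h1]; exact hp2⟩, by rw [← h1]⟩
      · exact Or.inr ⟨p.1, ⟨⟨h2, h3⟩, by rw [← h1]; exact hp2⟩, by rw [← h1]⟩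
    · rintro (⟨m', ⟨⟨hm1, hm2⟩, hm3⟩, hm4⟩ | ⟨m', ⟨⟨hm1, hm2⟩, hm3⟩, hm4⟩)
      · rw [← hm4]
        exact ⟨Or.inr (Or.inl ⟨rfl, hm1, hm2⟩), hm1, hm3⟩
      · rw [← hm4]
        exact ⟨Or.inr (Or.inr ⟨rfl, hm1, hm2⟩), hm2, hm3⟩
  have hdisj : Disjoint (((midSet i j).filter (fun m => x m < x i)).image (fun m => (i, m)))
      (((midSet i j).filter (fun m => x j < x m)).image (fun m => (m, j))) := by
    rw [Finset.disjoint_left]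
    rintro p hp1 hp2
    simp only [Finset.mem_image, Finset.mem_filter, midSet, Finset.mem_univ, true_and] at hp1 hp2
    obtain ⟨m1, ⟨⟨hm1, -⟩, -⟩, hme⟩ := hp1
    obtain ⟨m2, ⟨⟨hm2, -⟩, -⟩, hme'⟩ := hp2
    rw [← hme'] at hme
    have : m2 = i := (Prod.ext_iff.mp hme).1.symm
    rw [this] at hm2; exact lt_irrefl _ hm2
  have hPQdisj : Disjoint ((midSet i j).filter (fun m => x m < x i))
      ((midSet i j).filter (fun m => x j < x m)) := by
    rw [Finset.disjoint_left]
    intro m' hm1 hm2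
    simp only [Finset.mem_filter] at hm1 hm2
    exact absurd (lt_trans (lt_trans hm2.2 hm1.2) hxij) (lt_irrefl _)
  rw [hset, Finset.card_union_of_disjoint hdisj,
    Finset.card_image_of_injective _ (fun a b h => (Prod.ext_iff.mp h).2),
    Finset.card_image_of_injective _ (fun a b h => (Prod.ext_iff.mp h).1)] at hC
  have hsub : ((midSet i j).filter (fun m => x m < x i)) ∪
      ((midSet i j).filter (fun m => x j < x m)) ⊆ midSet i j := by
    intro m' hm'
    rcases Finset.mem_union.mp hm' with h' | h' <;> exact (Finset.mem_filter.mp h').1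
  have hcup : ((midSet i j).filter (fun m => x m < x i)) ∪
      ((midSet i j).filter (fun m => x j < x m)) = midSet i j := by
    apply Finset.eq_of_subset_of_card_le hsub
    rw [Finset.card_union_of_disjoint hPQdisj]
    omega
  have hmmem : m ∈ midSet i j := by
    simp only [midSet, Finset.mem_filter, Finset.mem_univ, true_and]
    exact ⟨him, hmj⟩
  rw [← hcup] at hmmem
  rcases Finset.mem_union.mp hmmem with h' | h' <;>
    simp only [Finset.mem_filter] at h'
  · exact absurd (lt_trans hxm1 h'.2) (lt_irrefl _)
  · exact absurd (lt_trans hxm2 h'.2) (lt_irrefl _)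

end SwapCount

section LenBasic
variable {n : ℕ}

lemma sr0_mul_self (b : ℕ) : sr0 n b * sr0 n b = 1 := by
  unfold sr0
  by_cases h : b + 1 < n
  · rw [dif_pos h, Equiv.swap_mul_self]
  · rw [dif_neg h, mul_one]

lemma lifting {x : Equiv.Perm (Fin n)} {b : ℕ} (hb : b + 1 < n) {i j : Fin n} (hij : i < j)
    (hasc : len (x * sr0 n b) = len x + 1)
    (hcov : len (x * Equiv.swap i j) = len x + 1)
    (hdesc : ¬ len ((x * Equiv.swap i j) * sr0 n b) = len (x * Equiv.swap i j) + 1) :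
    i = ⟨b, Nat.lt_of_succ_lt hb⟩ ∧ j = ⟨b + 1, hb⟩ := by
  have hbb : (⟨b, Nat.lt_of_succ_lt hb⟩ : Fin n) < ⟨b + 1, hb⟩ := fin_b_lt hb
  have hxb : x ⟨b, Nat.lt_of_succ_lt hb⟩ < x ⟨b + 1, hb⟩ := by
    rcases len_sr0_cases hb x with ⟨h, -⟩ | ⟨-, h⟩
    · exact h
    · omega
  have hyd : (x * Equiv.swap i j) ⟨b + 1, hb⟩ < (x * Equiv.swap i j) ⟨b, Nat.lt_of_succ_lt hb⟩ := by
    rcases len_sr0_cases hb (x * Equiv.swap i j) with ⟨-, h⟩ | ⟨h, -⟩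
    · exact absurd h hdesc
    · exact h
  obtain ⟨hxij, hnomid⟩ := cover_swap_lemma hij hcov
  simp only [Equiv.Perm.mul_apply] at hyd
  set bF : Fin n := ⟨b, Nat.lt_of_succ_lt hb⟩
  set bF1 : Fin n := ⟨b + 1, hb⟩
  by_cases h1 : i = bF
  · by_cases h2 : j = bF1
    · exact ⟨h1, h2⟩
    · subst h1
      have hb1j : bF1 ≠ j := fun hh => h2 hh.symm
      have hb1i : bF1 ≠ bF := ne_of_gt hbb
      rw [Equiv.swap_apply_left, Equiv.swap_apply_of_ne_of_ne hb1i hb1j] at hyd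
      have hjb1 : bF1 < j := by
        rw [Fin.lt_def] at hij ⊢
        have : (j : ℕ) ≠ b + 1 := fun hh => hb1j (Fin.ext hh.symm)
        simp only [bF, bF1, Fin.val_mk] at hij ⊢
        omega
      exact absurd ⟨hxb, hyd⟩ (hnomid bF1 hbb hjb1)
  · by_cases h2 : j = bF
    · subst h2
      have hb1i : bF1 ≠ i := ne_of_gt (lt_trans hij hbb)
      have hb1j : bF1 ≠ bF := ne_of_gt hbb
      rw [Equiv.swap_apply_right, Equiv.swap_apply_of_ne_of_ne hb1i hb1j] at hyd
      exact absurd (lt_trans (lt_trans hyd hxij) hxb) (lt_irrefl _)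
    · by_cases h3 : i = bF1
      · subst h3
        have hbi : bF ≠ bF1 := ne_of_lt hbb
        have hbj : bF ≠ j := fun hh => h2 hh.symm
        rw [Equiv.swap_apply_left, Equiv.swap_apply_of_ne_of_ne hbi hbj] at hyd
        exact absurd (lt_trans (lt_trans hyd hxb) hxij) (lt_irrefl _)
      · by_cases h4 : j = bF1
        · subst h4
          have hbi : bF ≠ i := fun hh => h1 hh.symm
          have hbj : bF ≠ bF1 := ne_of_lt hbb
          rw [Equiv.swap_apply_right, Equiv.swap_apply_of_ne_of_ne hbi hbj] at hyd
          have hib : i < bF := by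
            rw [Fin.lt_def] at hij ⊢
            have hne : (i : ℕ) ≠ b := fun hh => h1 (Fin.ext hh)
            simp only [bF, bF1, Fin.val_mk] at hij ⊢
            omega
          exact absurd ⟨hyd, hxb⟩ (hnomid bF hib hbb)
        · have hbi : bF ≠ i := fun hh => h1 hh.symm
          have hbj : bF ≠ j := fun hh => h2 hh.symm
          have hb1i : bF1 ≠ i := fun hh => h3 hh.symm
          have hb1j : bF1 ≠ j := fun hh => h4 hh.symm
          rw [Equiv.swap_apply_of_ne_of_ne hbi hbj,
            Equiv.swap_apply_of_ne_of_ne hb1i hb1j] at hyd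
          exact absurd (lt_trans hyd hxb) (lt_irrefl _)

lemma len_one : len (1 : Equiv.Perm (Fin n)) = 0 := by
  rw [len_eq_card_invs, Finset.card_eq_zero]
  ext p
  simp only [mem_invs, Finset.notMem_empty, iff_false, not_and, Equiv.Perm.one_apply]
  exact fun h => not_lt.mpr h.le

lemma eq_one_of_len_zero {v : Equiv.Perm (Fin n)} (h : len v = 0) : v = 1 := by
  have hmono : StrictMono ⇑v := by
    intro a c hac
    have hpe : ¬ (v c < v a) := by
      intro hlt
      have hmem : (a, c) ∈ invs v := mem_invs.mpr ⟨hac, hlt⟩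
      rw [len_eq_card_invs, Finset.card_eq_zero] at h
      rw [h] at hmem
      exact absurd hmem (Finset.notMem_empty _)
    rcases lt_trichotomy (v a) (v c) with h' | h' | h'
    · exact h'
    · exact absurd h' (apply_ne hac.ne)
    · exact absurd h' hpe
  have hrange : Set.range ⇑v = Set.range (id : Fin n → Fin n) := by
    rw [Set.range_id]
    exact Set.eq_univ_of_forall (fun z => ⟨v.symm z, v.apply_symm_apply z⟩)
  haveI : WellFoundedLT (Fin n) := inferInstance
  have hve := (hmono.range_inj strictMono_id).1 hrange
  exact Equiv.ext (fun z => by rw [hve]; rfl)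

lemma eq_one_of_no_descent {v : Equiv.Perm (Fin n)}
    (hno : ∀ b : ℕ, ∀ hb : b + 1 < n, v ⟨b, Nat.lt_of_succ_lt hb⟩ < v ⟨b + 1, hb⟩) : v = 1 := by
  cases n with
  | zero => exact Equiv.ext (fun z => absurd z.isLt (Nat.not_lt_zero _))
  | succ m =>
    have hmono : StrictMono ⇑v := by
      rw [Fin.strictMono_iff_lt_succ]
      intro i
      exact hno i.val (Nat.succ_lt_succ i.isLt)
    have hrange : Set.range ⇑v = Set.range (id : Fin (m + 1) → Fin (m + 1)) := by
      rw [Set.range_id]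
      exact Set.eq_univ_of_forall (fun z => ⟨v.symm z, v.apply_symm_apply z⟩)
    haveI : WellFoundedLT (Fin (m + 1)) := inferInstance
    have hve := (hmono.range_inj strictMono_id).1 hrange
    exact Equiv.ext (fun z => by rw [hve]; rfl)

lemma exists_descent {v : Equiv.Perm (Fin n)} (hv : v ≠ 1) :
    ∃ b : ℕ, ∃ hb : b + 1 < n, v ⟨b + 1, hb⟩ < v ⟨b, Nat.lt_of_succ_lt hb⟩ := by
  by_contra hno
  push_neg at hno
  refine hv (eq_one_of_no_descent (fun b hb => ?_))
  rcases lt_trichotomy (v ⟨b, Nat.lt_of_succ_lt hb⟩) (v ⟨b + 1, hb⟩) with h | h | h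
  · exact h
  · exact absurd h (apply_ne (by simp [Fin.ext_iff]))
  · exact absurd h (not_lt.mpr (hno b hb))

lemma descent_decomp {v : Equiv.Perm (Fin n)} (hv : v ≠ 1) :
    ∃ b : ℕ, ∃ _hb : b + 1 < n, len (v * sr0 n b) + 1 = len v ∧ v = (v * sr0 n b) * sr0 n b := by
  obtain ⟨b, hb, hdes⟩ := exists_descent hv
  exact ⟨b, hb, len_sr0_descent hb hdes, by rw [mul_assoc, sr0_mul_self, mul_one]⟩

end LenBasic

section XiBasic
variable {n : ℕ} {xi : Equiv.Perm (Fin n) → Equiv.Perm (Fin n) → MvPolynomial (Fin n) ℚ}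

lemma bruhat_len_le {w v : Equiv.Perm (Fin n)} (h : bruhatLE w v) : len w ≤ len v := by
  induction h with
  | refl => exact le_rfl
  | tail _ h2 ih => omega

lemma xi_at_one (hxi : IsXi xi) {w : Equiv.Perm (Fin n)} (hw : w ≠ 1) : xi w 1 = 0 := by
  refine hxi.1 w 1 (fun hble => hw ?_)
  have := bruhat_len_le hble
  rw [len_one] at this
  exact eq_one_of_len_zero (by omega)

lemma topVal_one : topVal (1 : Equiv.Perm (Fin n)) = 1 := by
  unfold topVal
  rw [Finset.filter_false_of_mem, Finset.prod_empty]
  rintro p - ⟨h1, h2⟩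
  simp only [Equiv.Perm.one_apply] at h2
  exact absurd h1 (not_lt.mpr h2.le)

lemma len_sr0_self {b : ℕ} (hb : b + 1 < n) : len (sr0 n b : Equiv.Perm (Fin n)) = 1 := by
  have := len_sr0_ascent hb (x := 1) (by
    simp only [Equiv.Perm.one_apply]
    exact fin_b_lt hb)
  rwa [one_mul, len_one] at this

lemma sr0_ne_one {b : ℕ} (hb : b + 1 < n) : (sr0 n b : Equiv.Perm (Fin n)) ≠ 1 := by
  intro h
  have := len_sr0_self hb
  rw [h, len_one] at this
  omega

/-- The recursion, repackaged. -/
lemma rec_xi (hxi : IsXi xi) {b : ℕ} (hb : b + 1 < n) (u v' : Equiv.Perm (Fin n)) :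
    xi u (v' * sr0 n b) = xi u v' +
      (if len (u * sr0 n b) < len u then rename ⇑v' (alphaR n b) * xi (u * sr0 n b) v'
        else 0) := by
  rcases len_sr0_cases hb u with ⟨-, hl⟩ | ⟨-, hl⟩
  · rw [if_neg (by omega), add_zero]
    exact (hxi.2.2 u v' b hb).2 (by omega)
  · rw [if_pos (by omega)]
    have := (hxi.2.2 u v' b hb).1 (by omega)
    linear_combination this

lemma xi_one_eq_one (hxi : IsXi xi) (v : Equiv.Perm (Fin n)) : xi 1 v = 1 := by
  suffices H : ∀ N : ℕ, ∀ v : Equiv.Perm (Fin n), len v ≤ N → xi 1 v = 1 by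
    exact H (len v) v le_rfl
  intro N
  induction N with
  | zero =>
    intro v hv
    have hv0 : len v = 0 := by omega
    rw [eq_one_of_len_zero hv0, hxi.2.1 1, topVal_one]
  | succ N ih =>
    intro v hv
    by_cases hv1 : v = 1
    · rw [hv1, hxi.2.1 1, topVal_one]
    · obtain ⟨b, hb, hlen, hveq⟩ := descent_decomp hv1
      rw [hveq, rec_xi hxi hb]
      rw [if_neg (by rw [one_mul, len_one, len_sr0_self hb]; omega), add_zero]
      exact ih _ (by omega)

lemma rename_alphaR {b : ℕ} (hb : b + 1 < n) (u : Equiv.Perm (Fin n)) :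
    rename ⇑u (alphaR n b) =
      X (u ⟨b, Nat.lt_of_succ_lt hb⟩) - X (u ⟨b + 1, hb⟩) := by
  rw [alphaR, dif_pos hb, map_sub, rename_X, rename_X]

lemma rename_chiW (u : Equiv.Perm (Fin n)) (m : ℕ) :
    rename ⇑u (chiW n m) =
      ∑ j ∈ Finset.univ.filter (fun j : Fin n => (j : ℕ) < m), X (u j) := by
  rw [chiW, map_sum]
  simp only [rename_X]

lemma rho (hb : b + 1 < n) (u : Equiv.Perm (Fin n)) (m : ℕ) :
    rename ⇑(u * sr0 n b) (chiW n m) = rename ⇑u (chiW n m) -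
      (if m = b + 1 then rename ⇑u (alphaR n b) else 0) := by
  set bF : Fin n := ⟨b, Nat.lt_of_succ_lt hb⟩
  set bF1 : Fin n := ⟨b + 1, hb⟩
  rw [rename_chiW, rename_chiW, rename_alphaR hb]
  have hsub : ∀ j : Fin n, j ≠ bF → j ≠ bF1 → (sr0 n b) j = j := by
    intro j h1 h2
    rw [sr0_eq_swap hb]
    exact Equiv.swap_apply_of_ne_of_ne h1 h2
  have hbf : (sr0 n b) bF = bF1 := by rw [sr0_eq_swap hb]; exact Equiv.swap_apply_left _ _
  have hbf1 : (sr0 n b) bF1 = bF := by rw [sr0_eq_swap hb]; exact Equiv.swap_apply_right _ _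
  have hdiff : (∑ j ∈ Finset.univ.filter (fun j : Fin n => (j : ℕ) < m), X ((u * sr0 n b) j))
      - (∑ j ∈ Finset.univ.filter (fun j : Fin n => (j : ℕ) < m), X (u j) : MvPolynomial (Fin n) ℚ)
      = ∑ j ∈ ({bF, bF1} : Finset (Fin n)).filter (fun j : Fin n => (j : ℕ) < m),
          (X ((u * sr0 n b) j) - X (u j)) := by
    rw [← Finset.sum_sub_distrib]
    refine (Finset.sum_subset ?_ ?_).symm
    · intro j hj
      simp only [Finset.mem_filter, Finset.mem_univ, true_and] at hj ⊢
      exact hj.2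
    · intro j hj hj'
      simp only [Finset.mem_filter, Finset.mem_univ, true_and] at hj
      simp only [Finset.mem_filter, Finset.mem_insert, Finset.mem_singleton, hj,
        and_true, not_or] at hj'
      rw [Equiv.Perm.mul_apply, hsub j hj'.1 hj'.2, sub_self]
  have hne : bF ≠ bF1 := ne_of_lt (fin_b_lt hb)
  by_cases hm : m = b + 1
  · have hfil : ({bF, bF1} : Finset (Fin n)).filter (fun j : Fin n => (j : ℕ) < m) = {bF} := by
      ext j
      simp only [Finset.mem_filter, Finset.mem_insert, Finset.mem_singleton]
      constructor
      · rintro ⟨rfl | rfl, hlt⟩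
        · rfl
        · exact absurd hlt (by simp [hm, bF1])
      · rintro rfl
        exact ⟨Or.inl rfl, by simp [hm, bF]⟩
    rw [if_pos hm]
    have := hdiff
    rw [hfil, Finset.sum_singleton] at this
    have e1 : (u * sr0 n b) bF = u bF1 := by rw [Equiv.Perm.mul_apply, hbf]
    rw [e1] at this
    linear_combination this
  · rw [if_neg hm, sub_zero]
    have hfil : ({bF, bF1} : Finset (Fin n)).filter (fun j : Fin n => (j : ℕ) < m) =
        ({bF, bF1} : Finset (Fin n)).filter (fun j : Fin n => (j : ℕ) < m) := rfl
    by_cases hm2 : b + 1 < m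
    · have hfil2 : ({bF, bF1} : Finset (Fin n)).filter (fun j : Fin n => (j : ℕ) < m) = {bF, bF1} := by
        ext j
        simp only [Finset.mem_filter, Finset.mem_insert, Finset.mem_singleton]
        constructor
        · rintro ⟨h, -⟩; exact h
        · rintro (rfl | rfl)
          · exact ⟨Or.inl rfl, by simp only [bF]; omega⟩
          · exact ⟨Or.inr rfl, by simp only [bF1]; omega⟩
      have := hdiff
      rw [hfil2, Finset.sum_pair hne] at this
      have e1 : (u * sr0 n b) bF = u bF1 := by rw [Equiv.Perm.mul_apply, hbf]
      have e2 : (u * sr0 n b) bF1 = u bF := by rw [Equiv.Perm.mul_apply, hbf1]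
      rw [e1, e2] at this
      linear_combination this
    · have hfil2 : ({bF, bF1} : Finset (Fin n)).filter (fun j : Fin n => (j : ℕ) < m) = ∅ := by
        ext j
        simp only [Finset.mem_filter, Finset.mem_insert, Finset.mem_singleton,
          Finset.notMem_empty, iff_false, not_and]
        rintro (rfl | rfl) <;> simp only [bF, bF1] <;> omega
      have := hdiff
      rw [hfil2, Finset.sum_empty] at this
      linear_combination this

end XiBasic

section Sval
variable {n : ℕ} {xi : Equiv.Perm (Fin n) → Equiv.Perm (Fin n) → MvPolynomial (Fin n) ℚ}

/-- if `b ≠ m-1` then `σ_m` has an ascent at `b`. -/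
lemma sigma_ascent {m b : ℕ} (hm1 : 1 ≤ m) (hmn : m < n) (hb : b + 1 < n) (hbm : b ≠ m - 1) :
    (sr0 n (m - 1) : Equiv.Perm (Fin n)) ⟨b, Nat.lt_of_succ_lt hb⟩ <
      (sr0 n (m - 1)) ⟨b + 1, hb⟩ := by
  have hm' : (m - 1) + 1 < n := by omega
  rw [sr0_eq_swap hm']
  set cF : Fin n := ⟨m - 1, Nat.lt_of_succ_lt hm'⟩
  set cF1 : Fin n := ⟨m - 1 + 1, hm'⟩
  set bF : Fin n := ⟨b, Nat.lt_of_succ_lt hb⟩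
  set bF1 : Fin n := ⟨b + 1, hb⟩
  have hbc : bF ≠ cF := fun h => hbm (by simpa [Fin.ext_iff] using h)
  by_cases h1 : b + 1 = m - 1
  · have hb1c : bF1 = cF := Fin.ext (by simpa using h1)
    have hbc1 : bF ≠ cF1 := fun h => by
      have := (Fin.ext_iff.mp h); simp only [bF, bF1, cF, cF1] at this; omega
    rw [hb1c, Equiv.swap_apply_left, Equiv.swap_apply_of_ne_of_ne hbc hbc1, Fin.lt_def]
    simp only [bF, bF1, cF, cF1]
    omega
  · by_cases h2 : b = m - 1 + 1
    · have hbceq : bF = cF1 := Fin.ext (by simpa using h2)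
      have hb1c : bF1 ≠ cF := fun h => by
        have := (Fin.ext_iff.mp h); simp only [bF, bF1, cF, cF1] at this; omega
      have hb1c1 : bF1 ≠ cF1 := fun h => by
        have := (Fin.ext_iff.mp h); simp only [bF, bF1, cF, cF1] at this; omega
      rw [hbceq, Equiv.swap_apply_right, Equiv.swap_apply_of_ne_of_ne hb1c hb1c1, Fin.lt_def]
      simp only [bF, bF1, cF, cF1]
      omega
    · have hbc1 : bF ≠ cF1 := fun h => by
        have := (Fin.ext_iff.mp h); simp only [bF, bF1, cF, cF1] at this; omega
      have hb1c : bF1 ≠ cF := fun h => by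
        have := (Fin.ext_iff.mp h); simp only [bF, bF1, cF, cF1] at this; omega
      have hb1c1 : bF1 ≠ cF1 := fun h => by
        have := (Fin.ext_iff.mp h); simp only [bF, bF1, cF, cF1] at this; omega
      rw [Equiv.swap_apply_of_ne_of_ne hbc hbc1, Equiv.swap_apply_of_ne_of_ne hb1c hb1c1]
      exact fin_b_lt hb

lemma sval (hxi : IsXi xi) {m : ℕ} (hm1 : 1 ≤ m) (hmn : m < n) (u : Equiv.Perm (Fin n)) :
    xi (sr0 n (m - 1)) u = chiW n m - rename ⇑u (chiW n m) := by
  have hm' : (m - 1) + 1 < n := by omega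
  suffices H : ∀ N : ℕ, ∀ u : Equiv.Perm (Fin n), len u ≤ N →
      xi (sr0 n (m - 1)) u = chiW n m - rename ⇑u (chiW n m) by
    exact H (len u) u le_rfl
  intro N
  induction N with
  | zero =>
    intro u hu
    have hu0 : len u = 0 := by omega
    rw [eq_one_of_len_zero hu0, xi_at_one hxi (sr0_ne_one hm'), Equiv.Perm.coe_one,
      rename_id_apply, sub_self]
  | succ N ih =>
    intro u hu
    by_cases hu1 : u = 1
    · rw [hu1, xi_at_one hxi (sr0_ne_one hm'), Equiv.Perm.coe_one, rename_id_apply, sub_self]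
    · obtain ⟨b, hb, hlen, hueq⟩ := descent_decomp hu1
      set u' := u * sr0 n b with hu'
      rw [hueq, rec_xi hxi hb, rho hb u' m]
      by_cases hbm : b = m - 1
      · have hsb : sr0 n b = sr0 n (m - 1) := by rw [hbm]
        rw [if_pos (by
          rw [hsb, sr0_mul_self, len_one, len_sr0_self hm']
          omega)]
        rw [hsb, sr0_mul_self, xi_one_eq_one hxi, mul_one]
        rw [if_pos (by omega)]
        rw [ih u' (by omega), hbm]
        ring
      · rw [if_neg (by
          have := len_sr0_ascent hb (x := sr0 n (m - 1)) (sigma_ascent hm1 hmn hb hbm)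
          omega)]
        rw [if_neg (by omega), add_zero, sub_zero]
        exact ih u' (by omega)

lemma chiW_zero : chiW n 0 = 0 := by
  unfold chiW
  rw [Finset.filter_false_of_mem, Finset.sum_empty]
  intro j _
  omega

lemma chiW_succ {m : ℕ} (hm : m < n) : chiW n (m + 1) = chiW n m + X ⟨m, hm⟩ := by
  unfold chiW
  have : Finset.univ.filter (fun j : Fin n => (j : ℕ) < m + 1) =
      insert ⟨m, hm⟩ (Finset.univ.filter (fun j : Fin n => (j : ℕ) < m)) := by
    ext j
    simp only [Finset.mem_filter, Finset.mem_univ, true_and, Finset.mem_insert, Fin.ext_iff,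
      Fin.val_mk]
    omega
  rw [this, Finset.sum_insert (by
    simp only [Finset.mem_filter, Finset.mem_univ, true_and, Fin.val_mk]
    omega)]
  ring

lemma chi3 {k : ℕ} (hk1 : 1 ≤ k) (hkn : k < n) :
    chiW n (k - 1) + chiW n (k + 1) + alphaR n (k - 1) = chiW n k + chiW n k := by
  have hk' : (k - 1) + 1 < n := by omega
  have hkeq : k = (k - 1) + 1 := by omega
  have h1 : chiW n k = chiW n (k - 1) + X ⟨k - 1, Nat.lt_of_succ_lt hk'⟩ := by
    have h := chiW_succ (m := k - 1) (n := n) (Nat.lt_of_succ_lt hk')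
    rw [show k - 1 + 1 = k from by omega] at h
    exact h
  have h2 : chiW n (k + 1) = chiW n k + X ⟨k, hkn⟩ := chiW_succ hkn
  have h3 : alphaR n (k - 1) = X ⟨k - 1, Nat.lt_of_succ_lt hk'⟩ - X ⟨k - 1 + 1, hk'⟩ := by
    rw [alphaR, dif_pos hk']
  have h4 : (⟨k - 1 + 1, hk'⟩ : Fin n) = ⟨k, hkn⟩ := Fin.ext (by simp; omega)
  rw [h2, h3, h4, h1]
  ring

lemma chi3R {k : ℕ} (hk1 : 1 ≤ k) (hkn : k < n) (u : Equiv.Perm (Fin n)) :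
    rename ⇑u (chiW n (k - 1)) + rename ⇑u (chiW n (k + 1)) + rename ⇑u (alphaR n (k - 1))
      = rename ⇑u (chiW n k) + rename ⇑u (chiW n k) := by
  have := congrArg (rename ⇑u) (chi3 hk1 hkn)
  simpa only [map_add] using this

lemma rename_chiW_n (u : Equiv.Perm (Fin n)) : rename ⇑u (chiW n n) = chiW n n := by
  rw [rename_chiW, chiW]
  have huniv : Finset.univ.filter (fun j : Fin n => (j : ℕ) < n) = Finset.univ := by
    ext j; simp [j.isLt]
  rw [huniv]
  exact Equiv.sum_comp u (fun j => X j)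

end Sval

section Comb
variable {n : ℕ}

noncomputable def FF (w : Equiv.Perm (Fin n)) (k : ℕ) : Finset (Fin n × Fin n) :=
  Finset.univ.filter (fun p : Fin n × Fin n =>
    p.1 < p.2 ∧ (p.1 : ℕ) < k ∧ k ≤ (p.2 : ℕ) ∧ len (w * Equiv.swap p.1 p.2) = len w + 1)

lemma mem_FF {w : Equiv.Perm (Fin n)} {k : ℕ} {p : Fin n × Fin n} :
    p ∈ FF w k ↔ p.1 < p.2 ∧ (p.1 : ℕ) < k ∧ k ≤ (p.2 : ℕ) ∧
      len (w * Equiv.swap p.1 p.2) = len w + 1 := by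
  simp [FF]

lemma sr0_apply_b {b : ℕ} (hb : b + 1 < n) :
    (sr0 n b : Equiv.Perm (Fin n)) ⟨b, Nat.lt_of_succ_lt hb⟩ = ⟨b + 1, hb⟩ := by
  rw [sr0_eq_swap hb]; exact Equiv.swap_apply_left _ _

lemma sr0_apply_b1 {b : ℕ} (hb : b + 1 < n) :
    (sr0 n b : Equiv.Perm (Fin n)) ⟨b + 1, hb⟩ = ⟨b, Nat.lt_of_succ_lt hb⟩ := by
  rw [sr0_eq_swap hb]; exact Equiv.swap_apply_right _ _

lemma sr0_apply_ne {b : ℕ} (hb : b + 1 < n) {z : Fin n} (h1 : (z : ℕ) ≠ b)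
    (h2 : (z : ℕ) ≠ b + 1) : (sr0 n b : Equiv.Perm (Fin n)) z = z := by
  rw [sr0_eq_swap hb]
  exact Equiv.swap_apply_of_ne_of_ne (fun h => h1 (Fin.ext_iff.mp h))
    (fun h => h2 (Fin.ext_iff.mp h))

lemma sr0_invol {b : ℕ} : ∀ z : Fin n, (sr0 n b) ((sr0 n b) z) = z := by
  intro z
  have := congrArg (fun σ : Equiv.Perm (Fin n) => σ z) (sr0_mul_self b (n := n))
  simpa [Equiv.Perm.mul_apply] using this

lemma combA {b k : ℕ} (hb : b + 1 < n) {w : Equiv.Perm (Fin n)}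
    (hasc : len (w * sr0 n b) = len w + 1) :
    (FF w k).filter (fun p => len (w * Equiv.swap p.1 p.2 * sr0 n b) <
        len (w * Equiv.swap p.1 p.2)) =
      if b + 1 = k then {((⟨b, Nat.lt_of_succ_lt hb⟩ : Fin n), (⟨b + 1, hb⟩ : Fin n))}
        else ∅ := by
  ext p
  rw [Finset.mem_filter, mem_FF]
  constructor
  · rintro ⟨⟨h12, hc1, hc2, hcov⟩, heps⟩
    have hlift := lifting hb h12 hasc hcov (by omega)
    have hk : b + 1 = k := by
      rw [hlift.1] at hc1
      rw [hlift.2] at hc2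
      simp only [Fin.val_mk] at hc1 hc2
      omega
    rw [if_pos hk, Finset.mem_singleton]
    exact Prod.ext hlift.1 hlift.2
  · intro hp
    by_cases hk : b + 1 = k
    · rw [if_pos hk, Finset.mem_singleton] at hp
      have hws : w * Equiv.swap (⟨b, Nat.lt_of_succ_lt hb⟩ : Fin n) ⟨b + 1, hb⟩ = w * sr0 n b := by
        rw [sr0_eq_swap hb]
      have hws2 : w * sr0 n b * sr0 n b = w := by
        rw [mul_assoc, sr0_mul_self, mul_one]
      rw [hp]
      refine ⟨⟨fin_b_lt hb, by simp only [Fin.val_mk]; omega, by simp only [Fin.val_mk]; omega,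
        by rw [hws, hasc]⟩, ?_⟩
      rw [hws, hws2, hasc]
      omega
    · rw [if_neg hk] at hp
      exact absurd hp (Finset.notMem_empty _)

end Comb

section Comb2
variable {n : ℕ}

lemma conj_rel {G : Type*} [Group G] {c : G} (hcc : c * c = 1) (a d : G) :
    (a * c) * (c * d * c) = a * (d * c) := by
  rw [show c * d * c = c * (d * c) from mul_assoc c d c, ← mul_assoc (a * c) c (d * c),
    mul_assoc a c c, hcc, mul_one]

lemma swapPhi {b : ℕ} (hb : b + 1 < n) (p : Fin n × Fin n) :
    Equiv.swap (Phi (sr0 n b) p).1 (Phi (sr0 n b) p).2 =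
      sr0 n b * Equiv.swap p.1 p.2 * sr0 n b := by
  have hsinv : (sr0 n b : Equiv.Perm (Fin n))⁻¹ = sr0 n b :=
    inv_eq_of_mul_eq_one_right (sr0_mul_self b)
  unfold Phi
  by_cases h : (sr0 n b) p.1 < (sr0 n b) p.2
  · rw [if_pos h]
    simp only
    rw [Equiv.swap_apply_apply, hsinv]
  · rw [if_neg h]
    simp only
    rw [Equiv.swap_comm, Equiv.swap_apply_apply, hsinv]

/-- the target index set for the conjugation bijection. -/
noncomputable def AA (x : Equiv.Perm (Fin n)) (b k : ℕ) (hb : b + 1 < n) :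
    Finset (Fin n × Fin n) :=
  Finset.univ.filter (fun q : Fin n × Fin n =>
    q.1 < q.2 ∧ len (x * Equiv.swap q.1 q.2) = len x + 1 ∧
    (((Phi (sr0 n b) q).1 : ℕ) < k ∧ k ≤ ((Phi (sr0 n b) q).2 : ℕ)) ∧
    q ≠ ((⟨b, Nat.lt_of_succ_lt hb⟩ : Fin n), (⟨b + 1, hb⟩ : Fin n)))

lemma Phi_sp {b : ℕ} (hb : b + 1 < n) :
    Phi (sr0 n b) ((⟨b, Nat.lt_of_succ_lt hb⟩ : Fin n), (⟨b + 1, hb⟩ : Fin n)) =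
      ((⟨b, Nat.lt_of_succ_lt hb⟩ : Fin n), (⟨b + 1, hb⟩ : Fin n)) := by
  unfold Phi
  simp only [sr0_apply_b hb, sr0_apply_b1 hb]
  rw [if_neg (not_lt.mpr (le_of_lt (fin_b_lt hb)))]

lemma comb_bij {b k : ℕ} (hb : b + 1 < n) (x : Equiv.Perm (Fin n))
    (hxs : len (x * sr0 n b) = len x + 1) (f : Equiv.Perm (Fin n) → MvPolynomial (Fin n) ℚ) :
    ∑ p ∈ (FF (x * sr0 n b) k).filter (fun p =>
        len ((x * sr0 n b) * Equiv.swap p.1 p.2 * sr0 n b) <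
          len ((x * sr0 n b) * Equiv.swap p.1 p.2)),
      f ((x * sr0 n b) * Equiv.swap p.1 p.2 * sr0 n b)
    = ∑ q ∈ AA x b k hb, f (x * Equiv.swap q.1 q.2) := by
  have hss : (sr0 n b : Equiv.Perm (Fin n)) * sr0 n b = 1 := sr0_mul_self b
  have hwlen : len (x * sr0 n b) = len x + 1 := hxs
  -- key permutation identity
  have hkey : ∀ p : Fin n × Fin n,
      x * Equiv.swap (Phi (sr0 n b) p).1 (Phi (sr0 n b) p).2 =
        (x * sr0 n b) * Equiv.swap p.1 p.2 * sr0 n b := by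
    intro p
    rw [swapPhi hb p]
    simp only [mul_assoc]
  refine Finset.sum_nbij' (Phi (sr0 n b)) (Phi (sr0 n b)) ?_ ?_ ?_ ?_ ?_
  · -- forward membership
    intro p hp
    rw [Finset.mem_filter, mem_FF] at hp
    obtain ⟨⟨h12, hc1, hc2, hcov⟩, heps⟩ := hp
    have hq12 := Phi_fst_lt_snd (t := sr0 n b) h12
    have hxval := hkey p
    have hlen2 : len ((x * sr0 n b) * Equiv.swap p.1 p.2 * sr0 n b) = len x + 1 := by
      rcases len_sr0_cases hb ((x * sr0 n b) * Equiv.swap p.1 p.2) with ⟨-, h⟩ | ⟨-, h⟩ <;> omega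
    have hqsp : Phi (sr0 n b) p ≠ ((⟨b, Nat.lt_of_succ_lt hb⟩ : Fin n), ⟨b + 1, hb⟩) := by
      intro hq
      have hp' : p = ((⟨b, Nat.lt_of_succ_lt hb⟩ : Fin n), ⟨b + 1, hb⟩) := by
        rw [← Phi_Phi sr0_invol h12, hq, Phi_sp hb]
      have : (x * sr0 n b) * Equiv.swap p.1 p.2 = x := by
        rw [hp']
        simp only
        rw [← sr0_eq_swap hb, mul_assoc, hss, mul_one]
      rw [this] at hcov
      omega
    rw [AA, Finset.mem_filter]
    refine ⟨Finset.mem_univ _, hq12, ?_, ?_, hqsp⟩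
    · rw [hxval]; exact hlen2
    · rw [Phi_Phi sr0_invol h12]
      exact ⟨hc1, hc2⟩
  · -- backward membership
    intro q hq
    rw [AA, Finset.mem_filter] at hq
    obtain ⟨-, hq12, hqcov, hqc, hqne⟩ := hq
    have hp12 := Phi_fst_lt_snd (t := sr0 n b) hq12
    have hlift : len ((x * Equiv.swap q.1 q.2) * sr0 n b) = len (x * Equiv.swap q.1 q.2) + 1 := by
      by_contra hcon
      have := lifting hb hq12 hxs hqcov hcon
      exact hqne (Prod.ext this.1 this.2)
    have hrel : (x * sr0 n b) * Equiv.swap (Phi (sr0 n b) q).1 (Phi (sr0 n b) q).2 =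
        x * Equiv.swap q.1 q.2 * sr0 n b := by
      rw [swapPhi hb q]
      exact conj_rel hss x (Equiv.swap q.1 q.2)
    rw [Finset.mem_filter, mem_FF]
    have hc : ((Phi (sr0 n b) q).1 : ℕ) < k ∧ k ≤ ((Phi (sr0 n b) q).2 : ℕ) := hqc
    refine ⟨⟨hp12, hc.1, hc.2, ?_⟩, ?_⟩
    · rw [hrel, hlift, hqcov, hwlen]
    · have : (x * sr0 n b) * Equiv.swap (Phi (sr0 n b) q).1 (Phi (sr0 n b) q).2 * sr0 n b =
          x * Equiv.swap q.1 q.2 := by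
        rw [hrel, mul_assoc, hss, mul_one]
      rw [this, hrel, hlift, hqcov]
      omega
  · intro p hp
    rw [Finset.mem_filter, mem_FF] at hp
    exact Phi_Phi sr0_invol hp.1.1
  · intro q hq
    rw [AA, Finset.mem_filter] at hq
    exact Phi_Phi sr0_invol hq.2.1
  · intro p hp
    rw [Finset.mem_filter, mem_FF] at hp
    rw [← hkey p]

end Comb2

section Comb3
variable {n : ℕ}

lemma Phi_cases {b : ℕ} (hb : b + 1 < n) {q : Fin n × Fin n} (hq12 : q.1 < q.2) :
    (Phi (sr0 n b) q = q ∧ (q.1 : ℕ) ≠ b ∧ (q.1 : ℕ) ≠ b + 1 ∧ (q.2 : ℕ) ≠ b ∧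
      (q.2 : ℕ) ≠ b + 1)
  ∨ (q = ((⟨b, Nat.lt_of_succ_lt hb⟩ : Fin n), (⟨b + 1, hb⟩ : Fin n)) ∧
      Phi (sr0 n b) q = ((⟨b, Nat.lt_of_succ_lt hb⟩ : Fin n), (⟨b + 1, hb⟩ : Fin n)))
  ∨ ((q.1 : ℕ) = b ∧ b + 1 < (q.2 : ℕ) ∧ Phi (sr0 n b) q = ((⟨b + 1, hb⟩ : Fin n), q.2))
  ∨ ((q.1 : ℕ) = b + 1 ∧ b + 1 < (q.2 : ℕ) ∧
      Phi (sr0 n b) q = ((⟨b, Nat.lt_of_succ_lt hb⟩ : Fin n), q.2))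
  ∨ ((q.2 : ℕ) = b ∧ (q.1 : ℕ) < b ∧ Phi (sr0 n b) q = (q.1, (⟨b + 1, hb⟩ : Fin n)))
  ∨ ((q.2 : ℕ) = b + 1 ∧ (q.1 : ℕ) < b ∧
      Phi (sr0 n b) q = (q.1, (⟨b, Nat.lt_of_succ_lt hb⟩ : Fin n))) := by
  have hqn : (q.1 : ℕ) < (q.2 : ℕ) := Fin.lt_def.mp hq12
  by_cases h1 : (q.1 : ℕ) = b
  · by_cases h2 : (q.2 : ℕ) = b + 1
    · have hq : q = ((⟨b, Nat.lt_of_succ_lt hb⟩ : Fin n), (⟨b + 1, hb⟩ : Fin n)) :=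
        Prod.ext (Fin.ext h1) (Fin.ext h2)
      exact Or.inr (Or.inl ⟨hq, by rw [hq, Phi_sp hb]⟩)
    · have h2' : b + 1 < (q.2 : ℕ) := by omega
      have e1 : (sr0 n b) q.1 = ⟨b + 1, hb⟩ := by
        rw [show q.1 = (⟨b, Nat.lt_of_succ_lt hb⟩ : Fin n) from Fin.ext h1, sr0_apply_b hb]
      have e2 : (sr0 n b) q.2 = q.2 := sr0_apply_ne hb (by omega) (by omega)
      have hlt : (sr0 n b) q.1 < (sr0 n b) q.2 := by
        rw [e1, e2, Fin.lt_def]; simpa using h2'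
      refine Or.inr (Or.inr (Or.inl ⟨h1, h2', ?_⟩))
      unfold Phi
      rw [if_pos hlt, e1, e2]
  · by_cases h1' : (q.1 : ℕ) = b + 1
    · have h2' : b + 1 < (q.2 : ℕ) := by omega
      have e1 : (sr0 n b) q.1 = ⟨b, Nat.lt_of_succ_lt hb⟩ := by
        rw [show q.1 = (⟨b + 1, hb⟩ : Fin n) from Fin.ext h1', sr0_apply_b1 hb]
      have e2 : (sr0 n b) q.2 = q.2 := sr0_apply_ne hb (by omega) (by omega)
      have hlt : (sr0 n b) q.1 < (sr0 n b) q.2 := by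
        rw [e1, e2, Fin.lt_def]; simp only [Fin.val_mk]; omega
      refine Or.inr (Or.inr (Or.inr (Or.inl ⟨h1', h2', ?_⟩)))
      unfold Phi
      rw [if_pos hlt, e1, e2]
    · by_cases h2 : (q.2 : ℕ) = b
      · have hlt1 : (q.1 : ℕ) < b := by omega
        have e1 : (sr0 n b) q.1 = q.1 := sr0_apply_ne hb (by omega) (by omega)
        have e2 : (sr0 n b) q.2 = ⟨b + 1, hb⟩ := by
          rw [show q.2 = (⟨b, Nat.lt_of_succ_lt hb⟩ : Fin n) from Fin.ext h2, sr0_apply_b hb]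
        have hlt : (sr0 n b) q.1 < (sr0 n b) q.2 := by
          rw [e1, e2, Fin.lt_def]; simp only [Fin.val_mk]; omega
        refine Or.inr (Or.inr (Or.inr (Or.inr (Or.inl ⟨h2, hlt1, ?_⟩))))
        unfold Phi
        rw [if_pos hlt, e1, e2]
      · by_cases h2' : (q.2 : ℕ) = b + 1
        · have hlt1 : (q.1 : ℕ) < b := by omega
          have e1 : (sr0 n b) q.1 = q.1 := sr0_apply_ne hb (by omega) (by omega)
          have e2 : (sr0 n b) q.2 = ⟨b, Nat.lt_of_succ_lt hb⟩ := by
            rw [show q.2 = (⟨b + 1, hb⟩ : Fin n) from Fin.ext h2', sr0_apply_b1 hb]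
          have hlt : (sr0 n b) q.1 < (sr0 n b) q.2 := by
            rw [e1, e2, Fin.lt_def]; simp only [Fin.val_mk]; omega
          refine Or.inr (Or.inr (Or.inr (Or.inr (Or.inr ⟨h2', hlt1, ?_⟩))))
          unfold Phi
          rw [if_pos hlt, e1, e2]
        · have e1 : (sr0 n b) q.1 = q.1 := sr0_apply_ne hb (by omega) (by omega)
          have e2 : (sr0 n b) q.2 = q.2 := sr0_apply_ne hb (by omega) (by omega)
          have hlt : (sr0 n b) q.1 < (sr0 n b) q.2 := by rw [e1, e2]; exact hq12
          refine Or.inl ⟨?_, h1, h1', h2, h2'⟩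
          unfold Phi
          rw [if_pos hlt, e1, e2]

lemma cross_Phi_iff {b k : ℕ} (hb : b + 1 < n) (hk : b + 1 ≠ k) {q : Fin n × Fin n}
    (hq12 : q.1 < q.2) :
    ((((Phi (sr0 n b) q).1 : ℕ) < k ∧ k ≤ ((Phi (sr0 n b) q).2 : ℕ)) ↔
      ((q.1 : ℕ) < k ∧ k ≤ (q.2 : ℕ))) := by
  have hqn : (q.1 : ℕ) < (q.2 : ℕ) := Fin.lt_def.mp hq12
  rcases Phi_cases hb hq12 with ⟨hP, -⟩ | ⟨hq, hP⟩ | ⟨h1, h2, hP⟩ | ⟨h1, h2, hP⟩ |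
    ⟨h1, h2, hP⟩ | ⟨h1, h2, hP⟩
  · rw [hP]
  · rw [hP, hq]
  · rw [hP]; dsimp only; omega
  · rw [hP]; dsimp only; omega
  · rw [hP]; dsimp only; omega
  · rw [hP]; dsimp only; omega

lemma comb0 {b k : ℕ} (hb : b + 1 < n) (hk : b + 1 ≠ k) (x : Equiv.Perm (Fin n))
    (hxs : len (x * sr0 n b) = len x + 1) (f : Equiv.Perm (Fin n) → MvPolynomial (Fin n) ℚ) :
    ∑ p ∈ (FF (x * sr0 n b) k).filter (fun p =>
        len ((x * sr0 n b) * Equiv.swap p.1 p.2 * sr0 n b) <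
          len ((x * sr0 n b) * Equiv.swap p.1 p.2)),
      f ((x * sr0 n b) * Equiv.swap p.1 p.2 * sr0 n b)
    = ∑ q ∈ FF x k, f (x * Equiv.swap q.1 q.2) := by
  rw [comb_bij hb x hxs f]
  apply Finset.sum_congr _ (fun _ _ => rfl)
  ext q
  rw [AA, Finset.mem_filter, mem_FF]
  constructor
  · rintro ⟨-, hq12, hcov, hc, -⟩
    exact ⟨hq12, ((cross_Phi_iff hb hk hq12).mp hc).1, ((cross_Phi_iff hb hk hq12).mp hc).2, hcov⟩
  · rintro ⟨hq12, hc1, hc2, hcov⟩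
    have hqn : (q.1 : ℕ) < (q.2 : ℕ) := Fin.lt_def.mp hq12
    refine ⟨Finset.mem_univ _, hq12, hcov, (cross_Phi_iff hb hk hq12).mpr ⟨hc1, hc2⟩, ?_⟩
    intro hq
    have hv1 : (q.1 : ℕ) = b := congrArg (fun r : Fin n × Fin n => ((r.1 : Fin n) : ℕ)) hq
    have hv2 : (q.2 : ℕ) = b + 1 := congrArg (fun r : Fin n × Fin n => ((r.2 : Fin n) : ℕ)) hq
    omega

lemma pointwise1 {b : ℕ} (hb : b + 1 < n) {q : Fin n × Fin n} (hq12 : q.1 < q.2)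
    (F : MvPolynomial (Fin n) ℚ) :
    (if ((((Phi (sr0 n b) q).1 : ℕ) < b + 1 ∧ b + 1 ≤ ((Phi (sr0 n b) q).2 : ℕ)) ∧
        q ≠ ((⟨b, Nat.lt_of_succ_lt hb⟩ : Fin n), (⟨b + 1, hb⟩ : Fin n))) then F else 0)
  + (if ((q.1 : ℕ) < b + 1 ∧ b + 1 ≤ (q.2 : ℕ)) then F else 0)
  = (if ((q.1 : ℕ) < b ∧ b ≤ (q.2 : ℕ)) then F else 0)
  + (if ((q.1 : ℕ) < b + 2 ∧ b + 2 ≤ (q.2 : ℕ)) then F else 0)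
  + (if q = ((⟨b, Nat.lt_of_succ_lt hb⟩ : Fin n), (⟨b + 1, hb⟩ : Fin n)) then F else 0) := by
  have hqn : (q.1 : ℕ) < (q.2 : ℕ) := Fin.lt_def.mp hq12
  have hval : ∀ hq : q = ((⟨b, Nat.lt_of_succ_lt hb⟩ : Fin n), (⟨b + 1, hb⟩ : Fin n)),
      (q.1 : ℕ) = b ∧ (q.2 : ℕ) = b + 1 := by
    intro hq
    exact ⟨congrArg (fun r : Fin n × Fin n => ((r.1 : Fin n) : ℕ)) hq,
      congrArg (fun r : Fin n × Fin n => ((r.2 : Fin n) : ℕ)) hq⟩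
  rcases Phi_cases hb hq12 with ⟨hP, e1, e2, e3, e4⟩ | ⟨hq, hP⟩ | ⟨h1, h2, hP⟩ | ⟨h1, h2, hP⟩ |
    ⟨h1, h2, hP⟩ | ⟨h1, h2, hP⟩
  · -- C6 : untouched
    rw [hP]
    have hne : q ≠ ((⟨b, Nat.lt_of_succ_lt hb⟩ : Fin n), (⟨b + 1, hb⟩ : Fin n)) :=
      fun hq => e1 (hval hq).1
    rw [if_neg (fun hq => e1 (hval hq).1)]
    by_cases hc : (q.1 : ℕ) < b + 1 ∧ b + 1 ≤ (q.2 : ℕ)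
    · rw [if_pos ⟨hc, hne⟩, if_pos hc, if_pos (by omega), if_pos (by omega)]
      ring
    · rw [if_neg (fun h => hc h.1), if_neg hc, if_neg (by omega), if_neg (by omega)]
      ring
  · -- C1 : q = sp
    have hv := hval hq
    rw [hP, if_pos hq]
    rw [if_neg (fun h => h.2 hq)]
    rw [if_pos (by omega), if_neg (by omega), if_neg (by omega)]
    ring
  · -- C2
    rw [hP]
    dsimp only
    rw [if_neg (by
      rintro ⟨⟨hca, -⟩, -⟩
      omega)]
    rw [if_pos (by omega), if_neg (by omega), if_pos (by omega),
      if_neg (fun hq => by have := (hval hq).2; omega)]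
    ring
  · -- C3
    rw [hP]
    dsimp only
    rw [if_pos ⟨⟨by omega, by omega⟩,
      fun hq => by have := (hval hq).1; omega⟩]
    rw [if_neg (by omega), if_neg (by omega), if_pos (by omega),
      if_neg (fun hq => by have := (hval hq).1; omega)]
    ring
  · -- C4
    rw [hP]
    dsimp only
    rw [if_pos ⟨⟨by omega, by omega⟩,
      fun hq => by have := (hval hq).2; omega⟩]
    rw [if_neg (by omega), if_pos (by omega), if_neg (by omega),
      if_neg (fun hq => by have := (hval hq).2; omega)]
    ring
  · -- C5
    rw [hP]
    dsimp only
    rw [if_neg (by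
      rintro ⟨⟨-, hca⟩, -⟩
      omega)]
    rw [if_pos (by omega), if_pos (by omega), if_neg (by omega),
      if_neg (fun hq => by have := (hval hq).1; omega)]
    ring

end Comb3

section Comb4
variable {n : ℕ}

noncomputable def Cov (x : Equiv.Perm (Fin n)) : Finset (Fin n × Fin n) :=
  Finset.univ.filter (fun q : Fin n × Fin n =>
    q.1 < q.2 ∧ len (x * Equiv.swap q.1 q.2) = len x + 1)

lemma FF_eq_Cov_filter (x : Equiv.Perm (Fin n)) (m : ℕ) :
    FF x m = (Cov x).filter (fun q => (q.1 : ℕ) < m ∧ m ≤ (q.2 : ℕ)) := by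
  ext q
  rw [mem_FF, Finset.mem_filter, Cov, Finset.mem_filter]
  simp only [Finset.mem_univ, true_and]
  tauto

lemma AA_eq_Cov_filter {b k : ℕ} (hb : b + 1 < n) (x : Equiv.Perm (Fin n)) :
    AA x b k hb = (Cov x).filter (fun q =>
      (((Phi (sr0 n b) q).1 : ℕ) < k ∧ k ≤ ((Phi (sr0 n b) q).2 : ℕ)) ∧
      q ≠ ((⟨b, Nat.lt_of_succ_lt hb⟩ : Fin n), (⟨b + 1, hb⟩ : Fin n))) := by
  ext q
  rw [AA, Finset.mem_filter, Finset.mem_filter, Cov, Finset.mem_filter]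
  simp only [Finset.mem_univ, true_and]
  tauto

lemma comb1 {b : ℕ} (hb : b + 1 < n) (x : Equiv.Perm (Fin n))
    (hxs : len (x * sr0 n b) = len x + 1) (f : Equiv.Perm (Fin n) → MvPolynomial (Fin n) ℚ) :
    (∑ p ∈ (FF (x * sr0 n b) (b + 1)).filter (fun p =>
        len ((x * sr0 n b) * Equiv.swap p.1 p.2 * sr0 n b) <
          len ((x * sr0 n b) * Equiv.swap p.1 p.2)),
      f ((x * sr0 n b) * Equiv.swap p.1 p.2 * sr0 n b))
    + ∑ q ∈ FF x (b + 1), f (x * Equiv.swap q.1 q.2)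
    = (∑ q ∈ FF x b, f (x * Equiv.swap q.1 q.2))
      + (∑ q ∈ FF x (b + 2), f (x * Equiv.swap q.1 q.2))
      + f (x * sr0 n b) := by
  rw [comb_bij hb x hxs f]
  have hsp : ((⟨b, Nat.lt_of_succ_lt hb⟩ : Fin n), (⟨b + 1, hb⟩ : Fin n)) ∈ Cov x := by
    rw [Cov, Finset.mem_filter]
    refine ⟨Finset.mem_univ _, fin_b_lt hb, ?_⟩
    rw [← sr0_eq_swap hb]
    exact hxs
  have hlast : f (x * sr0 n b) = ∑ q ∈ Cov x,
      (if q = ((⟨b, Nat.lt_of_succ_lt hb⟩ : Fin n), (⟨b + 1, hb⟩ : Fin n)) then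
        f (x * Equiv.swap q.1 q.2) else 0) := by
    rw [Finset.sum_ite_eq' (Cov x)
      ((⟨b, Nat.lt_of_succ_lt hb⟩ : Fin n), (⟨b + 1, hb⟩ : Fin n))
      (fun q => f (x * Equiv.swap q.1 q.2)), if_pos hsp]
    rw [← sr0_eq_swap hb]
  rw [AA_eq_Cov_filter hb x, FF_eq_Cov_filter x (b + 1), FF_eq_Cov_filter x b,
    FF_eq_Cov_filter x (b + 2), hlast]
  rw [Finset.sum_filter, Finset.sum_filter, Finset.sum_filter, Finset.sum_filter]
  rw [← Finset.sum_add_distrib, ← Finset.sum_add_distrib, ← Finset.sum_add_distrib]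
  refine Finset.sum_congr rfl (fun q hq => ?_)
  rw [Cov, Finset.mem_filter] at hq
  exact pointwise1 hb hq.2.1 (f (x * Equiv.swap q.1 q.2))

lemma FF_zero_empty (x : Equiv.Perm (Fin n)) : FF x 0 = ∅ := by
  ext p
  rw [mem_FF]
  simp only [Finset.notMem_empty, iff_false, not_and]
  intro _ h
  omega

lemma FF_n_empty (x : Equiv.Perm (Fin n)) : FF x n = ∅ := by
  ext p
  rw [mem_FF]
  simp only [Finset.notMem_empty, iff_false, not_and]
  intro _ _ h
  exact absurd (lt_of_le_of_lt h p.2.isLt) (lt_irrefl _)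

end Comb4

section Main
variable {n : ℕ} {xi : Equiv.Perm (Fin n) → Equiv.Perm (Fin n) → MvPolynomial (Fin n) ℚ}

lemma base (hxi : IsXi xi) (w : Equiv.Perm (Fin n)) (k : ℕ) :
    xi (sr0 n (k - 1)) 1 * xi w 1 =
      xi (sr0 n (k - 1)) w * xi w 1 + ∑ p ∈ FF w k, xi (w * Equiv.swap p.1 p.2) 1 := by
  have hsum : ∑ p ∈ FF w k, xi (w * Equiv.swap p.1 p.2) 1 = 0 := by
    refine Finset.sum_eq_zero (fun p hp => ?_)
    rw [mem_FF] at hp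
    refine xi_at_one hxi (fun h => ?_)
    rw [h, len_one] at hp
    omega
  rw [hsum, add_zero]
  by_cases hw : w = 1
  · rw [hw]
  · rw [xi_at_one hxi hw]
    ring

lemma Elem (hxi : IsXi xi) {v' : Equiv.Perm (Fin n)}
    (IH : ∀ (w : Equiv.Perm (Fin n)) (k : ℕ), 1 ≤ k → k < n →
      xi (sr0 n (k - 1)) v' * xi w v' =
        xi (sr0 n (k - 1)) w * xi w v' + ∑ p ∈ FF w k, xi (w * Equiv.swap p.1 p.2) v')
    (x : Equiv.Perm (Fin n)) (m : ℕ) (hm : m ≤ n) :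
    (rename ⇑x (chiW n m) - rename ⇑v' (chiW n m)) * xi x v' =
      ∑ q ∈ FF x m, xi (x * Equiv.swap q.1 q.2) v' := by
  by_cases hm0 : m = 0
  · rw [hm0, chiW_zero, map_zero, map_zero, sub_zero, zero_mul, FF_zero_empty,
      Finset.sum_empty]
  · by_cases hmn : m = n
    · rw [hmn, rename_chiW_n, rename_chiW_n, sub_self, zero_mul, FF_n_empty,
        Finset.sum_empty]
    · have hm1 : 1 ≤ m := by omega
      have hmn' : m < n := by omega
      have := IH x m hm1 hmn'
      rw [sval hxi hm1 hmn' v', sval hxi hm1 hmn' x] at this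
      linear_combination this

lemma sum_split (hxi : IsXi xi) {b : ℕ} (hb : b + 1 < n) (w : Equiv.Perm (Fin n)) (k : ℕ)
    (v' : Equiv.Perm (Fin n)) :
    ∑ p ∈ FF w k, xi (w * Equiv.swap p.1 p.2) (v' * sr0 n b)
    = (∑ p ∈ FF w k, xi (w * Equiv.swap p.1 p.2) v')
      + rename ⇑v' (alphaR n b) *
        ∑ p ∈ (FF w k).filter (fun p => len (w * Equiv.swap p.1 p.2 * sr0 n b) <
            len (w * Equiv.swap p.1 p.2)),
          xi (w * Equiv.swap p.1 p.2 * sr0 n b) v' := by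
  have hpt : ∀ p ∈ FF w k, xi (w * Equiv.swap p.1 p.2) (v' * sr0 n b) =
      xi (w * Equiv.swap p.1 p.2) v' +
      (if len (w * Equiv.swap p.1 p.2 * sr0 n b) < len (w * Equiv.swap p.1 p.2) then
        rename ⇑v' (alphaR n b) * xi (w * Equiv.swap p.1 p.2 * sr0 n b) v' else 0) :=
    fun p _ => rec_xi hxi hb _ v'
  rw [Finset.sum_congr rfl hpt, Finset.sum_add_distrib]
  congr 1
  rw [Finset.mul_sum, Finset.sum_filter]

lemma step (hxi : IsXi xi) {b : ℕ} (hb : b + 1 < n) (v' : Equiv.Perm (Fin n))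
    (IH : ∀ (w : Equiv.Perm (Fin n)) (k : ℕ), 1 ≤ k → k < n →
      xi (sr0 n (k - 1)) v' * xi w v' =
        xi (sr0 n (k - 1)) w * xi w v' + ∑ p ∈ FF w k, xi (w * Equiv.swap p.1 p.2) v')
    (w : Equiv.Perm (Fin n)) (k : ℕ) (hk1 : 1 ≤ k) (hkn : k < n) :
    xi (sr0 n (k - 1)) (v' * sr0 n b) * xi w (v' * sr0 n b) =
      xi (sr0 n (k - 1)) w * xi w (v' * sr0 n b) +
        ∑ p ∈ FF w k, xi (w * Equiv.swap p.1 p.2) (v' * sr0 n b) := by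
  have hk' : (k - 1) + 1 < n := by omega
  have hσ : xi (sr0 n (k - 1)) (v' * sr0 n b) = xi (sr0 n (k - 1)) v' +
      (if b = k - 1 then rename ⇑v' (alphaR n b) else 0) := by
    rw [rec_xi hxi hb]
    congr 1
    by_cases hbk : b = k - 1
    · have hone : sr0 n (k - 1) * sr0 n b = 1 := by rw [hbk]; exact sr0_mul_self _
      rw [if_pos hbk, if_pos (by rw [hone, len_one, len_sr0_self hk']; omega), hone,
        xi_one_eq_one hxi, mul_one]
    · rw [if_neg hbk, if_neg (by
        have := len_sr0_ascent hb (x := sr0 n (k - 1)) (sigma_ascent hk1 hkn hb hbk)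
        omega)]
  rcases len_sr0_cases hb w with ⟨hwasc, hwlen⟩ | ⟨hwdesc, hwlen⟩
  · -- ascent case for w
    have hxw : xi w (v' * sr0 n b) = xi w v' := by
      rw [rec_xi hxi hb, if_neg (by omega), add_zero]
    rw [hσ, hxw, sum_split hxi hb w k v', combA hb hwlen (k := k)]
    by_cases hbk : b = k - 1
    · have hbk1 : b + 1 = k := by omega
      rw [if_pos hbk, if_pos hbk1, Finset.sum_singleton]
      have hcollapse : w * Equiv.swap (⟨b, Nat.lt_of_succ_lt hb⟩ : Fin n) ⟨b + 1, hb⟩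
          * sr0 n b = w := by
        rw [← sr0_eq_swap hb, mul_assoc, sr0_mul_self, mul_one]
      rw [hcollapse]
      linear_combination IH w k hk1 hkn
    · rw [if_neg hbk, if_neg (by omega), Finset.sum_empty, mul_zero, add_zero, add_zero]
      exact IH w k hk1 hkn
  · -- descent case for w
    set x := w * sr0 n b with hx
    have hwx : x * sr0 n b = w := by rw [hx, mul_assoc, sr0_mul_self, mul_one]
    have hxs : len (x * sr0 n b) = len x + 1 := by rw [hwx]; omega
    have hxw : xi w (v' * sr0 n b) = xi w v' + rename ⇑v' (alphaR n b) * xi x v' := by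
      rw [rec_xi hxi hb, if_pos (by rw [← hx]; omega)]
    have IHw := IH w k hk1 hkn
    rw [hσ, hxw, sum_split hxi hb w k v']
    by_cases hbk : b = k - 1
    · -- δ = 1
      have hkeq : k = b + 1 := by omega
      subst hkeq
      simp only [Nat.add_sub_cancel] at *
      have hcomb1 := comb1 hb x hxs (fun u => xi u v')
      rw [hwx] at hcomb1
      have hEm := Elem hxi IH x b (by omega)
      have hEp := Elem hxi IH x (b + 2) (by omega)
      have hEk := Elem hxi IH x (b + 1) (by omega)
      have c3v := chi3R (k := b + 1) (by omega) hkn v'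
      have c3x := chi3R (k := b + 1) (by omega) hkn x
      simp only [Nat.add_sub_cancel] at c3v c3x
      have hren := rho hb x (b + 1)
      rw [if_pos rfl, hwx] at hren
      have hA := sval hxi (m := b + 1) (by omega) hkn v'
      have hc := sval hxi (m := b + 1) (by omega) hkn w
      simp only [Nat.add_sub_cancel] at hA hc
      -- rewrite Elem's index b+2-1... nothing needed; Elem gives k+1 = b+2 directly
      have hEp2 : (rename ⇑x (chiW n (b + 1 + 1)) - rename ⇑v' (chiW n (b + 1 + 1))) * xi x v'
          = ∑ q ∈ FF x (b + 1 + 1), xi (x * Equiv.swap q.1 q.2) v' := by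
        rw [show b + 1 + 1 = b + 2 from rfl]
        exact hEp
      simp only [if_true]
      linear_combination IHw + (rename ⇑v' (alphaR n b) * xi x v') * hren +
        (rename ⇑v' (alphaR n b) * xi x v') * hA -
        (rename ⇑v' (alphaR n b) * xi x v') * hc +
        (rename ⇑v' (alphaR n b) * xi x v') * c3v -
        (rename ⇑v' (alphaR n b) * xi x v') * c3x +
        rename ⇑v' (alphaR n b) * hEm + rename ⇑v' (alphaR n b) * hEp2 -
        rename ⇑v' (alphaR n b) * hEk - rename ⇑v' (alphaR n b) * hcomb1
    · -- δ = 0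
      have hkb1 : b + 1 ≠ k := by omega
      have hcomb0 := comb0 hb hkb1 x hxs (fun u => xi u v')
      rw [hwx] at hcomb0
      have hEk := Elem hxi IH x k (by omega)
      have hA := sval hxi hk1 hkn v'
      have hc := sval hxi hk1 hkn w
      have hcx := sval hxi hk1 hkn x
      have hren := rho hb x k
      rw [if_neg (fun h => hkb1 h.symm), sub_zero, hwx] at hren
      rw [if_neg hbk, add_zero, hcomb0]
      linear_combination IHw + rename ⇑v' (alphaR n b) * hEk +
        (rename ⇑v' (alphaR n b) * xi x v') * hA -
        (rename ⇑v' (alphaR n b) * xi x v') * hc +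
        (rename ⇑v' (alphaR n b) * xi x v') * hren

theorem stmt_main (hxi : IsXi xi) (w : Equiv.Perm (Fin n)) (k : ℕ) (hk1 : 1 ≤ k)
    (hkn : k < n) (v : Equiv.Perm (Fin n)) :
    xi (sr0 n (k - 1)) v * xi w v =
      xi (sr0 n (k - 1)) w * xi w v + ∑ p ∈ FF w k, xi (w * Equiv.swap p.1 p.2) v := by
  have main : ∀ N : ℕ, ∀ v : Equiv.Perm (Fin n), len v ≤ N →
      ∀ (w : Equiv.Perm (Fin n)) (k : ℕ), 1 ≤ k → k < n →
      xi (sr0 n (k - 1)) v * xi w v =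
        xi (sr0 n (k - 1)) w * xi w v + ∑ p ∈ FF w k, xi (w * Equiv.swap p.1 p.2) v := by
    intro N
    induction N with
    | zero =>
      intro v hv w k hk1 hkn
      have hv1 : v = 1 := eq_one_of_len_zero (by omega)
      rw [hv1]
      exact base hxi w k
    | succ N ih =>
      intro v hv w k hk1 hkn
      by_cases hv1 : v = 1
      · rw [hv1]; exact base hxi w k
      · obtain ⟨b, hb, hlen, hveq⟩ := descent_decomp hv1
        rw [hveq]
        exact step hxi hb (v * sr0 n b)
          (fun w' k' hk1' hkn' => ih (v * sr0 n b) (by omega) w' k' hk1' hkn') w k hk1 hkn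
  exact main (len v) v le_rfl w k hk1 hkn

end Main

theorem stmt12 {n : ℕ}
    (xi : Equiv.Perm (Fin n) → Equiv.Perm (Fin n) → MvPolynomial (Fin n) ℚ)
    (hxi : IsXi xi) (w : Equiv.Perm (Fin n)) (k : ℕ) (hk1 : 1 ≤ k) (hkn : k < n)
    (v : Equiv.Perm (Fin n)) :
    xi (sr0 n (k - 1)) v * xi w v =
      xi (sr0 n (k - 1)) w * xi w v +
      ∑ p ∈ Finset.univ.filter (fun p : Fin n × Fin n =>
          p.1 < p.2 ∧ (p.1 : ℕ) < k ∧ k ≤ (p.2 : ℕ) ∧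
          len (w * Equiv.swap p.1 p.2) = len w + 1),
        xi (w * Equiv.swap p.1 p.2) v := by
  exact stmt_main hxi w k hk1 hkn v
end
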